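/- arXiv:2605.09230 — 7 statements merged into one kernel-verified Lean document; each statement's English description precedes it below -/
import Mathlib

section
/- The Gauss measure, i.e. the Borel measure on [0,1) with density x ↦ 1/(log 2 · (1+x)) with respect to Lebesgue measure, is a probability measure and is invariant under the Gauss map: the Gauss map is measure-preserving with respect to this measure. -/
/-!
The density is the derivative of `F x = log (1 + x) / log 2`, so the Gauss measure of `[0, a]` is
`F a`. For `0 ≤ a < 1`, the points of `(0, 1]` that the Gauss map sends into `[0, a]` form the
disjoint union of the intervals `[1 / (n + a), 1 / n]`, `n ≥ 1`, and their masses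
`F (1 / n) - F (1 / (n + a)) = F (a / n) - F (a / (n + 1))` telescope to `F a`. Finite measures on
`ℝ` are determined by their values on the rays `(-∞, a]`.
-/

open MeasureTheory

/-- The Gauss map `T : [0,1) → [0,1)`, `T 0 = 0` and `T x = 1/x - ⌊1/x⌋` for `x ≠ 0`. -/
noncomputable def gaussMap : ℝ → ℝ := fun x => if x = 0 then 0 else Int.fract (1 / x)

/-- The Gauss measure: the Borel measure on `[0,1)` with density
`x ↦ 1 / (log 2 * (1 + x))` with respect to Lebesgue measure. -/
noncomputable def gaussMeasure : Measure ℝ :=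
  (volume.restrict (Set.Ico (0 : ℝ) 1)).withDensity
    fun x => ENNReal.ofReal (1 / (Real.log 2 * (1 + x)))

open Set Filter Topology Function

theorem withDensity_ofReal_Icc_of_hasDerivWithinAt {F f : ℝ → ℝ} {c d : ℝ} (hcd : c ≤ d)
    (hF : ∀ x ∈ Icc c d, HasDerivWithinAt F (f x) (Icc c d) x)
    (hmono : MonotoneOn F (Icc c d)) :
    volume.withDensity (fun x => ENNReal.ofReal (f x)) (Icc c d) = ENNReal.ofReal (F d - F c) := by
  have hcont : ContinuousOn F (Icc c d) := fun x hx => (hF x hx).continuousWithinAt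
  rw [withDensity_apply _ measurableSet_Icc,
    lintegral_deriv_eq_volume_image_of_monotoneOn measurableSet_Icc hF hmono,
    hcont.image_Icc_of_monotoneOn hcd hmono, Real.volume_Icc]

theorem ENNReal.tsum_ofReal_sub_succ_of_antitone {f : ℕ → ℝ} {l : ℝ} (hf : Antitone f)
    (hl : Tendsto f atTop (𝓝 l)) :
    ∑' n, ENNReal.ofReal (f n - f (n + 1)) = ENNReal.ofReal (f 0 - l) := by
  have hnonneg : ∀ n, 0 ≤ f n - f (n + 1) := fun n => sub_nonneg.2 (hf n.le_succ)
  have hsum : HasSum (fun n => f n - f (n + 1)) (f 0 - l) := by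
    refine (hasSum_iff_tendsto_nat_of_nonneg hnonneg _).2 ?_
    simp_rw [Finset.sum_range_sub']
    exact tendsto_const_nhds.sub hl
  rw [← ENNReal.ofReal_tsum_of_nonneg hnonneg hsum.summable, hsum.tsum_eq]

theorem Int.fract_le_iff_exists_nat {y a : ℝ} (hy : 1 ≤ y) :
    Int.fract y ≤ a ↔ ∃ n : ℕ, (n : ℝ) + 1 ≤ y ∧ y ≤ n + 1 + a := by
  constructor
  · intro h
    have hfloor : 1 ≤ ⌊y⌋₊ := Nat.one_le_floor_iff _ |>.2 hy
    refine ⟨⌊y⌋₊ - 1, ?_, ?_⟩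
    · rw [Nat.cast_sub hfloor, Nat.cast_one, sub_add_cancel]
      exact Nat.floor_le (by linarith)
    · rw [Nat.cast_sub hfloor, Nat.cast_one, sub_add_cancel,
        natCast_floor_eq_intCast_floor (by linarith)]
      linarith [Int.self_sub_floor y]
  · rintro ⟨n, hny, hya⟩
    have : ((n + 1 : ℤ) : ℝ) ≤ ⌊y⌋ := by exact_mod_cast Int.le_floor.2 (by push_cast; exact hny)
    rw [← Int.self_sub_floor]
    push_cast at this
    linarith

noncomputable def gaussDensity (x : ℝ) : ℝ := 1 / (Real.log 2 * (1 + x))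

noncomputable def gaussCDF (x : ℝ) : ℝ := Real.log (1 + x) / Real.log 2

theorem hasDerivAt_gaussCDF {x : ℝ} (hx : -1 < x) : HasDerivAt gaussCDF (gaussDensity x) x :=
  ((((hasDerivAt_id x).const_add 1).log (by simp; linarith)).div_const (Real.log 2)).congr_deriv
    (by simp [gaussDensity]; field_simp)

theorem gaussCDF_monotoneOn : MonotoneOn gaussCDF (Ioi (-1)) := fun x hx y _ hxy =>
  div_le_div_of_nonneg_right (Real.log_le_log (by simp at hx; linarith) (by linarith))
    (Real.log_nonneg one_le_two)

theorem gaussCDF_zero : gaussCDF 0 = 0 := by simp [gaussCDF]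

theorem gaussCDF_one : gaussCDF 1 = 1 := by
  rw [gaussCDF, one_add_one_eq_two, div_self (Real.log_pos one_lt_two).ne']

theorem gaussCDF_inv_sub_gaussCDF_inv {m a : ℝ} (hm : 0 < m) (ha : 0 ≤ a) :
    gaussCDF m⁻¹ - gaussCDF (m + a)⁻¹ = gaussCDF (a / m) - gaussCDF (a / (m + 1)) := by
  simp only [gaussCDF, ← sub_div]
  rw [← Real.log_div (by positivity) (by positivity), ← Real.log_div (by positivity) (by positivity)]
  congr 2
  field_simp
  ring

theorem measurable_gaussMap : Measurable gaussMap :=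
  Measurable.ite (measurableSet_singleton 0) measurable_const
    (measurable_const.div measurable_id).fract

theorem gaussMap_mem_Ico (x : ℝ) : gaussMap x ∈ Ico 0 1 := by
  unfold gaussMap
  split_ifs
  · simp
  · exact ⟨Int.fract_nonneg _, Int.fract_lt_one _⟩

theorem gaussMap_preimage_Iic_inter_Ioc {a : ℝ} (ha : 0 ≤ a) :
    gaussMap ⁻¹' Iic a ∩ Ioc 0 1 = ⋃ n : ℕ, Icc ((n + 1 + a)⁻¹) ((n + 1)⁻¹) := by
  ext x
  simp only [mem_inter_iff, mem_preimage, mem_Iic, mem_Ioc, mem_iUnion, mem_Icc]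
  constructor
  · rintro ⟨hTx, hx0, hx1⟩
    have hinv : 1 ≤ x⁻¹ := one_le_inv₀ hx0 |>.2 hx1
    rw [gaussMap, if_neg hx0.ne', one_div, Int.fract_le_iff_exists_nat hinv] at hTx
    obtain ⟨n, hn, hna⟩ := hTx
    exact ⟨n, inv_le_of_inv_le₀ hx0 hna, le_inv_of_le_inv₀ (by positivity) hn⟩
  · rintro ⟨n, hxa, hxn⟩
    have hx0 : 0 < x := lt_of_lt_of_le (by positivity) hxa
    have hx1 : x ≤ 1 := hxn.trans (inv_le_one_of_one_le₀ (by simp))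
    refine ⟨?_, hx0, hx1⟩
    rw [gaussMap, if_neg hx0.ne', one_div, Int.fract_le_iff_exists_nat (one_le_inv₀ hx0 |>.2 hx1)]
    exact ⟨n, le_inv_of_le_inv₀ (by positivity) hxn, inv_le_of_inv_le₀ (by positivity) hxa⟩

theorem pairwise_disjoint_Icc_inv {a : ℝ} (ha0 : 0 ≤ a) (ha1 : a < 1) :
    Pairwise (Disjoint on fun n : ℕ => Icc ((n + 1 + a)⁻¹) ((n + 1 : ℝ)⁻¹)) := by
  refine (pairwise_disjoint_on _).2 fun m n hmn => Set.disjoint_left.2 fun x hxm hxn => ?_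
  have hmn' : (m : ℝ) + 1 + a < n + 1 := by
    have : (m : ℝ) + 1 ≤ n := by exact_mod_cast hmn
    linarith
  have := (inv_lt_inv₀ (by positivity) (by positivity)).2 hmn'
  linarith [hxm.1, hxn.2]

noncomputable def gaussDensityMeasure : Measure ℝ :=
  volume.withDensity fun x => ENNReal.ofReal (gaussDensity x)

instance : NullSingletonClass gaussDensityMeasure := by
  unfold gaussDensityMeasure
  infer_instance

theorem gaussDensityMeasure_Icc {c d : ℝ} (hc : -1 < c) (hcd : c ≤ d) :
    gaussDensityMeasure (Icc c d) = ENNReal.ofReal (gaussCDF d - gaussCDF c) :=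
  withDensity_ofReal_Icc_of_hasDerivWithinAt hcd
    (fun _ hx => (hasDerivAt_gaussCDF (hc.trans_le hx.1)).hasDerivWithinAt)
    (gaussCDF_monotoneOn.mono fun _ hx => hc.trans_le hx.1)

theorem gaussMeasure_eq_restrict_Ioc : gaussMeasure = gaussDensityMeasure.restrict (Ioc 0 1) := by
  rw [gaussMeasure, gaussDensityMeasure, ← restrict_withDensity measurableSet_Ico]
  exact Measure.restrict_congr_set Ico_ae_eq_Ioc

theorem gaussMeasure_apply {s : Set ℝ} (hs : MeasurableSet s) :
    gaussMeasure s = gaussDensityMeasure (s ∩ Ioc 0 1) := by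
  rw [gaussMeasure_eq_restrict_Ioc, Measure.restrict_apply hs]

theorem gaussMeasure_Iic {a : ℝ} (ha0 : 0 ≤ a) (ha1 : a ≤ 1) :
    gaussMeasure (Iic a) = ENNReal.ofReal (gaussCDF a) := by
  rw [gaussMeasure_apply measurableSet_Iic, Iic_inter_Ioc_of_le ha1, measure_congr Ioc_ae_eq_Icc,
    gaussDensityMeasure_Icc (by norm_num) ha0, gaussCDF_zero, sub_zero]

theorem gaussDensityMeasure_Ioc_zero_one : gaussDensityMeasure (Ioc 0 1) = 1 := by
  rw [measure_congr Ioc_ae_eq_Icc, gaussDensityMeasure_Icc (by norm_num) zero_le_one, gaussCDF_one,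
    gaussCDF_zero, sub_zero, ENNReal.ofReal_one]

instance isProbabilityMeasure_gaussMeasure : IsProbabilityMeasure gaussMeasure :=
  ⟨by rw [gaussMeasure_apply MeasurableSet.univ, univ_inter, gaussDensityMeasure_Ioc_zero_one]⟩

theorem gaussMeasure_preimage_Iic {a : ℝ} (ha0 : 0 ≤ a) (ha1 : a < 1) :
    gaussMeasure (gaussMap ⁻¹' Iic a) = ENNReal.ofReal (gaussCDF a) := by
  rw [gaussMeasure_apply (measurable_gaussMap measurableSet_Iic),
    gaussMap_preimage_Iic_inter_Ioc ha0,
    measure_iUnion (pairwise_disjoint_Icc_inv ha0 ha1) fun _ => measurableSet_Icc]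
  set f : ℕ → ℝ := fun n => gaussCDF (a / (n + 1))
  have hterm (n : ℕ) : gaussDensityMeasure (Icc ((n + 1 + a)⁻¹) ((n + 1)⁻¹)) =
      ENNReal.ofReal (f n - f (n + 1)) := by
    rw [gaussDensityMeasure_Icc (neg_one_lt_zero.trans (by positivity))
      (inv_anti₀ (by positivity) (by linarith)), gaussCDF_inv_sub_gaussCDF_inv (by positivity) ha0]
    push_cast [f, add_assoc]
    rfl
  have hanti : Antitone f := fun m n hmn =>
    gaussCDF_monotoneOn (neg_one_lt_zero.trans_le (by positivity : (0 : ℝ) ≤ _))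
      (neg_one_lt_zero.trans_le (by positivity : (0 : ℝ) ≤ _))
      (div_le_div_of_nonneg_left ha0 (by positivity) (by gcongr))
  have hlim : Tendsto f atTop (𝓝 0) := by
    have hcont : ContinuousAt gaussCDF 0 := (hasDerivAt_gaussCDF (by norm_num)).continuousAt
    simpa [f, comp_def, gaussCDF_zero] using hcont.tendsto.comp
      ((tendsto_add_atTop_iff_nat 1).2 (tendsto_const_div_atTop_nhds_zero_nat a))
  rw [tsum_congr hterm, ENNReal.tsum_ofReal_sub_succ_of_antitone hanti hlim]
  simp [f]

/-- The Gauss measure is a probability measure, and the Gauss map is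
measure-preserving with respect to it. -/
theorem gaussMeasure_isProbability_and_gaussMap_measurePreserving :
    IsProbabilityMeasure gaussMeasure ∧
      MeasurePreserving gaussMap gaussMeasure gaussMeasure := by
  refine ⟨inferInstance, measurable_gaussMap, Measure.ext_of_Iic _ _ fun a => ?_⟩
  rw [Measure.map_apply measurable_gaussMap measurableSet_Iic]
  rcases lt_or_ge a 0 with ha0 | ha0
  · have hempty : gaussMap ⁻¹' Iic a = ∅ :=
      eq_empty_of_forall_notMem fun x hx => (gaussMap_mem_Ico x).1.not_gt (lt_of_le_of_lt hx ha0)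
    rw [hempty, measure_empty, gaussMeasure_apply measurableSet_Iic,
      Iic_inter_Ioc_of_le (by linarith), Ioc_eq_empty_of_le ha0.le, measure_empty]
  rcases lt_or_ge a 1 with ha1 | ha1
  · rw [gaussMeasure_preimage_Iic ha0 ha1, gaussMeasure_Iic ha0 ha1.le]
  · have huniv : gaussMap ⁻¹' Iic a = univ :=
      eq_univ_of_forall fun x => ((gaussMap_mem_Ico x).2.trans_le ha1).le
    rw [huniv, measure_univ, gaussMeasure_apply measurableSet_Iic,
      inter_eq_right.2 (Ioc_subset_Iic_self.trans (Iic_subset_Iic.2 ha1)),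
      gaussDensityMeasure_Ioc_zero_one]
end

section
/- Legendre's theorem on best approximation: let x be an irrational real number, p an integer and q a positive integer with gcd(p,q) = 1. If |x − p/q| < 1/(2q²), then p/q is a convergent of the regular continued fraction expansion of x, i.e. p/q = pₙ/qₙ for some n. -/
/-- The partial quotients of the regular continued fraction expansion
`x = [a₀; a₁, a₂, …]`: `a₀ = ⌊x⌋` and `aₙ₊₁ = ⌊1 / Tⁿ({x})⌋` where `T` is the Gauss map. -/
noncomputable def cfA (x : ℝ) : ℕ → ℤ
  | 0 => ⌊x⌋
  | n + 1 => ⌊1 / gaussMap^[n] (Int.fract x)⌋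

/-- Numerators of the convergents: `p₀ = a₀`, `p₁ = a₁a₀ + 1`, `pₙ = aₙpₙ₋₁ + pₙ₋₂`. -/
noncomputable def convP (x : ℝ) : ℕ → ℤ
  | 0 => ⌊x⌋
  | 1 => cfA x 1 * ⌊x⌋ + 1
  | n + 2 => cfA x (n + 2) * convP x (n + 1) + convP x n

/-- Denominators of the convergents: `q₀ = 1`, `q₁ = a₁`, `qₙ = aₙqₙ₋₁ + qₙ₋₂`. -/
noncomputable def convQ (x : ℝ) : ℕ → ℤ
  | 0 => 1
  | 1 => cfA x 1
  | n + 2 => cfA x (n + 2) * convQ x (n + 1) + convQ x n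

/-!
For irrational `x` the Gauss-map orbit of `{x}` never reaches `0`, so the `aₙ` are exactly the
partial denominators of Mathlib's continued fraction `GenContFract.of x`, and `pₙ / qₙ` are its
convergents. Legendre's theorem is then `Real.exists_convs_eq_rat` applied to the rational `p / q`,
whose reduced denominator is at most `q`.
-/

theorem irrational_gaussMap {y : ℝ} (hy : Irrational y) : Irrational (gaussMap y) := by
  rw [gaussMap, if_neg hy.ne_zero, ← Int.self_sub_floor]
  exact (one_div y ▸ hy.inv).sub_intCast _

theorem irrational_iterate_gaussMap_fract {x : ℝ} (hx : Irrational x) (n : ℕ) :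
    Irrational (gaussMap^[n] (Int.fract x)) := by
  induction n with
  | zero => simpa [← Int.self_sub_floor] using hx.sub_intCast ⌊x⌋
  | succ n ih => simpa only [Function.iterate_succ_apply'] using irrational_gaussMap ih

namespace GenContFract

theorem IntFractPair.stream_eq_cfA_of_irrational {x : ℝ} (hx : Irrational x) (n : ℕ) :
    IntFractPair.stream x n = some ⟨cfA x n, gaussMap^[n] (Int.fract x)⟩ := by
  induction n with
  | zero => rfl
  | succ n ih =>
    have hne : gaussMap^[n] (Int.fract x) ≠ 0 :=
      (irrational_iterate_gaussMap_fract hx n).ne_zero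
    rw [IntFractPair.stream_succ_of_some ih hne, Function.iterate_succ_apply',
      gaussMap, if_neg hne]
    simp [IntFractPair.of, cfA]

theorem of_s_get?_eq_cfA {x : ℝ} (hx : Irrational x) (n : ℕ) :
    (GenContFract.of x).s.get? n = some ⟨1, (cfA x (n + 1) : ℝ)⟩ :=
  get?_of_eq_some_of_succ_get?_intFractPair_stream
    (IntFractPair.stream_eq_cfA_of_irrational hx (n + 1))

theorem of_nums_eq_convP {x : ℝ} (hx : Irrational x) :
    ∀ n, (GenContFract.of x).nums n = convP x n
  | 0 => by simp [convP, of_h_eq_floor]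
  | 1 => by simp [convP, first_num_eq (of_s_get?_eq_cfA hx 0), of_h_eq_floor]
  | n + 2 => by
    rw [nums_recurrence (of_s_get?_eq_cfA hx (n + 1)) (of_nums_eq_convP hx n)
      (of_nums_eq_convP hx (n + 1))]
    simp [convP]

theorem of_dens_eq_convQ {x : ℝ} (hx : Irrational x) :
    ∀ n, (GenContFract.of x).dens n = convQ x n
  | 0 => by simp [convQ]
  | 1 => by simp [convQ, first_den_eq (of_s_get?_eq_cfA hx 0)]
  | n + 2 => by
    rw [dens_recurrence (of_s_get?_eq_cfA hx (n + 1)) (of_dens_eq_convQ hx n)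
      (of_dens_eq_convQ hx (n + 1))]
    simp [convQ]

theorem of_convs_eq_convP_div_convQ {x : ℝ} (hx : Irrational x) (n : ℕ) :
    (GenContFract.of x).convs n = convP x n / convQ x n := by
  rw [conv_eq_num_div_den, of_nums_eq_convP hx, of_dens_eq_convQ hx]

end GenContFract

theorem Rat.den_intCast_div_natCast_le (p : ℤ) {q : ℕ} (hq : 0 < q) :
    ((p : ℚ) / q).den ≤ q := by
  refine Nat.le_of_dvd hq (Int.natCast_dvd_natCast.mp ?_)
  simpa [Rat.divInt_eq_div] using Rat.den_dvd p q

theorem legendre_best_approximation_general (x : ℝ) (hx : Irrational x) (p : ℤ) (q : ℕ)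
    (hq : 0 < q)
    (happrox : |x - (p : ℝ) / (q : ℝ)| < 1 / (2 * (q : ℝ) ^ 2)) :
    ∃ n : ℕ, (p : ℝ) / (q : ℝ) = (convP x n : ℝ) / (convQ x n : ℝ) := by
  have hden : (((p : ℚ) / q).den : ℝ) ≤ q := mod_cast Rat.den_intCast_div_natCast_le p hq
  obtain ⟨n, hn⟩ := Real.exists_convs_eq_rat (ξ := x) (q := (p : ℚ) / q) <| by
    push_cast
    refine happrox.trans_le (one_div_le_one_div_of_le (by positivity) ?_)
    gcongr
  refine ⟨n, ?_⟩
  rw [← GenContFract.of_convs_eq_convP_div_convQ hx, hn]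
  norm_cast

/-- Legendre's theorem: if `x` is irrational, `gcd(p,q) = 1`, `q > 0`, and
`|x - p/q| < 1/(2q²)`, then `p/q` is a convergent of the continued fraction of `x`. -/
theorem legendre_best_approximation (x : ℝ) (hx : Irrational x) (p : ℤ) (q : ℕ)
    (hq : 0 < q) (hcop : Nat.gcd p.natAbs q = 1)
    (happrox : |x - (p : ℝ) / (q : ℝ)| < 1 / (2 * (q : ℝ) ^ 2)) :
    ∃ n : ℕ, (p : ℝ) / (q : ℝ) = (convP x n : ℝ) / (convQ x n : ℝ) :=
  legendre_best_approximation_general x hx p q hq happrox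
end

section
/- Lagrange's theorem on continued fractions: an irrational real number x has an eventually periodic regular continued fraction expansion (i.e. there exist N ≥ 1 and k ≥ 1 with aₙ₊ₖ = aₙ for all n ≥ N) if and only if x is a quadratic irrational, i.e. x satisfies a polynomial equation A x² + B x + C = 0 with integer coefficients and A ≠ 0. -/
/-!
Let `zₙ = [aₙ; aₙ₊₁, …]` be the complete quotients and `pₙ / qₙ` the convergents. Then
`x = (pₙ₋₁ zₙ + pₙ₋₂) / (qₙ₋₁ zₙ + qₙ₋₂)`, and the determinant `pₙ₋₁ qₙ₋₂ - pₙ₋₂ qₙ₋₁ = ±1` gives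
`|x qₙ - pₙ| ≤ 1 / qₙ` with `qₙ → ∞`; in particular the partial quotients determine an irrational
number.

If the expansion is periodic from `aₘ₊₁` on with period `k`, the remainders `Tᵐ{x}` and `Tᵐ⁺ᵏ{x}`
have the same expansion, hence are equal, and the Möbius relation between `Tᵐ{x}` and its own `k`-th
complete quotient is a quadratic equation; `t ↦ a + 1 / t` preserves quadratic irrationals.

Conversely, if `A x² + B x + C = 0`, the Möbius relation makes `zₙ` a root of
`f(pₙ₋₁, qₙ₋₁) z² + bₙ z + f(pₙ₋₂, qₙ₋₂)`, where `f(X, Y) = A X² + B X Y + C Y²`. The outer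
coefficients are bounded because `pₙ / qₙ` approximates `x` so well, and the discriminant is
`B² - 4 A C`, so `bₙ` is bounded too. Only finitely many numbers are roots of quadratics of bounded
height, so `zᵢ = zⱼ` for some `i < j`, and the expansion repeats from there on.
-/

/-- The convergent numerators of `[a₀; a₁, …]` shifted by two, `cfNum a (n + 2) = pₙ`, so that the
initial values `p₋₂ = 0`, `p₋₁ = 1` get natural-number indices. -/
def cfNum (a : ℕ → ℤ) : ℕ → ℤ
  | 0 => 0
  | 1 => 1
  | n + 2 => a n * cfNum a (n + 1) + cfNum a n

/-- The convergent denominators, shifted like `cfNum`: `cfDen a (n + 2) = qₙ`. -/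
def cfDen (a : ℕ → ℤ) : ℕ → ℤ
  | 0 => 1
  | 1 => 0
  | n + 2 => a n * cfDen a (n + 1) + cfDen a n

section Convergents

variable (a : ℕ → ℤ)

theorem cfNum_add_two (n : ℕ) : cfNum a (n + 2) = a n * cfNum a (n + 1) + cfNum a n := rfl

theorem cfDen_add_two (n : ℕ) : cfDen a (n + 2) = a n * cfDen a (n + 1) + cfDen a n := rfl

theorem cfNum_succ_mul_cfDen_sub (n : ℕ) :
    cfNum a (n + 1) * cfDen a n - cfNum a n * cfDen a (n + 1) = (-1) ^ n := by
  induction n with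
  | zero => simp [cfNum, cfDen]
  | succ n ih =>
    rw [cfNum_add_two, cfDen_add_two, pow_succ]
    linear_combination -ih

theorem mul_cfDen_eq_cfNum {z : ℕ → ℝ} (hz : ∀ n, z n * z (n + 1) = a n * z (n + 1) + 1)
    (n : ℕ) : z 0 * (cfDen a (n + 1) * z n + cfDen a n) = cfNum a (n + 1) * z n + cfNum a n := by
  induction n with
  | zero => simp [cfNum, cfDen]
  | succ n ih =>
    push_cast [cfNum_add_two, cfDen_add_two]
    linear_combination z (n + 1) * ih + (cfNum a (n + 1) - z 0 * cfDen a (n + 1)) * hz n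

theorem mul_cfDen_sub_cfNum_mul_eq {z : ℕ → ℝ}
    (hz : ∀ n, z n * z (n + 1) = a n * z (n + 1) + 1) (n : ℕ) :
    (z 0 * cfDen a (n + 1) - cfNum a (n + 1)) * (cfDen a (n + 1) * z n + cfDen a n)
      = (-1) ^ (n + 1) := by
  have hdet : (cfNum a (n + 1) * cfDen a n - cfNum a n * cfDen a (n + 1) : ℝ) = (-1) ^ n := by
    exact_mod_cast cfNum_succ_mul_cfDen_sub a n
  rw [pow_succ]
  linear_combination (cfDen a (n + 1) : ℝ) * mul_cfDen_eq_cfNum a hz n - hdet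

variable {a}

theorem fib_le_cfDen (ha : ∀ n, 1 ≤ a (n + 1)) : ∀ n, (Nat.fib n : ℤ) ≤ cfDen a (n + 1)
  | 0 => by simp [cfDen]
  | 1 => by simp [cfDen]
  | n + 2 => by
    have h₀ := fib_le_cfDen ha n
    have h₁ := fib_le_cfDen ha (n + 1)
    have hpos : (0 : ℤ) ≤ cfDen a (n + 2) := (Int.natCast_nonneg _).trans h₁
    rw [Nat.fib_add_two, cfDen_add_two]
    push_cast
    nlinarith [ha n]

theorem cfDen_nonneg (ha : ∀ n, 1 ≤ a (n + 1)) (n : ℕ) : 0 ≤ cfDen a (n + 1) :=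
  (Int.natCast_nonneg _).trans (fib_le_cfDen ha n)

theorem one_le_cfDen (ha : ∀ n, 1 ≤ a (n + 1)) (n : ℕ) : 1 ≤ cfDen a (n + 2) :=
  le_trans (by exact_mod_cast Nat.fib_pos.2 n.succ_pos) (fib_le_cfDen ha (n + 1))

theorem cfDen_ne_zero (ha : ∀ n, 1 ≤ a (n + 1)) (n : ℕ) : cfDen a (n + 2) ≠ 0 :=
  (one_pos.trans_le (one_le_cfDen ha n)).ne'

end Convergents

theorem gaussMap_nonneg (t : ℝ) : 0 ≤ gaussMap t := by
  unfold gaussMap; split_ifs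
  exacts [le_rfl, Int.fract_nonneg _]

theorem gaussMap_lt_one (t : ℝ) : gaussMap t < 1 := by
  unfold gaussMap; split_ifs
  exacts [one_pos, Int.fract_lt_one _]

theorem floor_one_div_add_gaussMap {t : ℝ} (ht : t ≠ 0) : (⌊1 / t⌋ : ℝ) + gaussMap t = 1 / t := by
  rw [gaussMap, if_neg ht, Int.floor_add_fract]

theorem irrational_gaussMap_s5 {t : ℝ} (ht : Irrational t) : Irrational (gaussMap t) := by
  rw [gaussMap, if_neg ht.ne_zero, Int.fract, one_div]
  exact ht.inv.sub_intCast _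

noncomputable def cfFrac (x : ℝ) (n : ℕ) : ℝ := gaussMap^[n] (Int.fract x)

/-- The complete quotient `zₙ = [aₙ; aₙ₊₁, …]`. -/
noncomputable def completeQuot (x : ℝ) (n : ℕ) : ℝ := cfA x n + cfFrac x n

section CompleteQuotients

variable {x : ℝ}

theorem cfA_succ (x : ℝ) (n : ℕ) : cfA x (n + 1) = ⌊1 / cfFrac x n⌋ := rfl

theorem cfFrac_succ (x : ℝ) (n : ℕ) : cfFrac x (n + 1) = gaussMap (cfFrac x n) :=
  Function.iterate_succ_apply' ..

theorem cfFrac_nonneg (x : ℝ) : ∀ n, 0 ≤ cfFrac x n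
  | 0 => Int.fract_nonneg x
  | n + 1 => by rw [cfFrac_succ]; exact gaussMap_nonneg _

theorem cfFrac_lt_one (x : ℝ) : ∀ n, cfFrac x n < 1
  | 0 => Int.fract_lt_one x
  | n + 1 => by rw [cfFrac_succ]; exact gaussMap_lt_one _

theorem cfFrac_add (x : ℝ) (m t : ℕ) : cfFrac x (m + t) = gaussMap^[t] (cfFrac x m) := by
  rw [cfFrac, cfFrac, add_comm, Function.iterate_add_apply]

theorem cfFrac_cfFrac (x : ℝ) (m t : ℕ) : cfFrac (cfFrac x m) t = cfFrac x (m + t) := by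
  rw [cfFrac_add, cfFrac, Int.fract_eq_self.2 ⟨cfFrac_nonneg x m, cfFrac_lt_one x m⟩]

theorem cfA_cfFrac_zero (x : ℝ) (m : ℕ) : cfA (cfFrac x m) 0 = 0 :=
  Int.floor_eq_zero_iff.2 ⟨cfFrac_nonneg x m, cfFrac_lt_one x m⟩

theorem cfA_cfFrac_succ (x : ℝ) (m t : ℕ) : cfA (cfFrac x m) (t + 1) = cfA x (m + t + 1) := by
  rw [cfA_succ, cfFrac_cfFrac, cfA_succ]

theorem cfA_add_eq_of_cfFrac_eq {i j : ℕ} (h : cfFrac x i = cfFrac x j) (t : ℕ) :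
    cfA x (i + t + 1) = cfA x (j + t + 1) := by
  rw [cfA_succ, cfA_succ, cfFrac_add, cfFrac_add, h]

theorem fract_completeQuot (x : ℝ) (n : ℕ) : Int.fract (completeQuot x n) = cfFrac x n := by
  rw [completeQuot, Int.fract_intCast_add, Int.fract_eq_self]
  exact ⟨cfFrac_nonneg x n, cfFrac_lt_one x n⟩

theorem completeQuot_zero (x : ℝ) : completeQuot x 0 = x :=
  Int.floor_add_fract x

variable (hx : Irrational x)
include hx

theorem irrational_cfFrac : ∀ n, Irrational (cfFrac x n)
  | 0 => hx.sub_intCast ⌊x⌋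
  | n + 1 => by rw [cfFrac_succ]; exact irrational_gaussMap_s5 (irrational_cfFrac n)

theorem cfFrac_pos (n : ℕ) : 0 < cfFrac x n :=
  (cfFrac_nonneg x n).lt_of_ne (irrational_cfFrac hx n).ne_zero.symm

theorem completeQuot_succ (n : ℕ) : completeQuot x (n + 1) = 1 / cfFrac x n := by
  rw [completeQuot, cfA_succ, cfFrac_succ, floor_one_div_add_gaussMap (cfFrac_pos hx n).ne']

theorem one_le_cfA_succ (n : ℕ) : 1 ≤ cfA x (n + 1) := by
  rw [cfA_succ, Int.le_floor, Int.cast_one, le_div_iff₀ (cfFrac_pos hx n), one_mul]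
  exact (cfFrac_lt_one x n).le

theorem irrational_completeQuot (n : ℕ) : Irrational (completeQuot x n) :=
  (irrational_cfFrac hx n).intCast_add _

theorem one_lt_completeQuot_succ (n : ℕ) : 1 < completeQuot x (n + 1) := by
  have : (1 : ℝ) ≤ cfA x (n + 1) := by exact_mod_cast one_le_cfA_succ hx n
  rw [completeQuot]
  linarith [cfFrac_pos hx (n + 1)]

theorem completeQuot_mul_succ (n : ℕ) :
    completeQuot x n * completeQuot x (n + 1) = cfA x n * completeQuot x (n + 1) + 1 := by
  rw [completeQuot_succ hx, completeQuot]
  field_simp [(cfFrac_pos hx n).ne']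

end CompleteQuotients

section Approximation

variable {x : ℝ} (hx : Irrational x)
include hx

theorem mul_cfDen_cfA_eq (n : ℕ) :
    x * (cfDen (cfA x) (n + 1) * completeQuot x n + cfDen (cfA x) n)
      = cfNum (cfA x) (n + 1) * completeQuot x n + cfNum (cfA x) n := by
  simpa only [completeQuot_zero] using mul_cfDen_eq_cfNum (cfA x) (completeQuot_mul_succ hx) n

theorem cfDen_le_cfDen_mul_completeQuot_add (n : ℕ) :
    (cfDen (cfA x) (n + 1) : ℝ) ≤ cfDen (cfA x) (n + 1) * completeQuot x n + cfDen (cfA x) n := by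
  cases n with
  | zero => norm_num [cfDen]
  | succ n =>
    have hq₁ : (0 : ℝ) ≤ cfDen (cfA x) (n + 2) := by
      exact_mod_cast cfDen_nonneg (one_le_cfA_succ hx) (n + 1)
    have hq₀ : (0 : ℝ) ≤ cfDen (cfA x) (n + 1) := by
      exact_mod_cast cfDen_nonneg (one_le_cfA_succ hx) n
    nlinarith [one_lt_completeQuot_succ hx n]

theorem one_le_cfDen_mul_completeQuot_add (n : ℕ) :
    1 ≤ cfDen (cfA x) (n + 1) * completeQuot x n + cfDen (cfA x) n := by
  cases n with
  | zero => norm_num [cfDen]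
  | succ n =>
    refine le_trans ?_ (cfDen_le_cfDen_mul_completeQuot_add hx (n + 1))
    exact_mod_cast one_le_cfDen (one_le_cfA_succ hx) n

theorem abs_mul_cfDen_sub_cfNum_mul_eq_one (n : ℕ) :
    |x * cfDen (cfA x) (n + 1) - cfNum (cfA x) (n + 1)|
      * (cfDen (cfA x) (n + 1) * completeQuot x n + cfDen (cfA x) n) = 1 := by
  have hpos := zero_lt_one.trans_le (one_le_cfDen_mul_completeQuot_add hx n)
  rw [← abs_of_pos hpos, ← abs_mul]
  nth_rw 1 [← completeQuot_zero x]
  rw [mul_cfDen_sub_cfNum_mul_eq (cfA x) (completeQuot_mul_succ hx), abs_neg_one_pow]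

theorem abs_mul_cfDen_sub_cfNum_le_one (n : ℕ) :
    |x * cfDen (cfA x) (n + 1) - cfNum (cfA x) (n + 1)| ≤ 1 := by
  calc _ ≤ _ := le_mul_of_one_le_right (abs_nonneg _) (one_le_cfDen_mul_completeQuot_add hx n)
    _ = 1 := abs_mul_cfDen_sub_cfNum_mul_eq_one hx n

theorem abs_mul_cfDen_sub_cfNum_mul_cfDen_le_one (n : ℕ) :
    |x * cfDen (cfA x) (n + 1) - cfNum (cfA x) (n + 1)| * cfDen (cfA x) (n + 1) ≤ 1 := by
  calc _ ≤ _ := mul_le_mul_of_nonneg_left (cfDen_le_cfDen_mul_completeQuot_add hx n) (abs_nonneg _)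
    _ = 1 := abs_mul_cfDen_sub_cfNum_mul_eq_one hx n

end Approximation

theorem eq_of_cfA_eq {u v : ℝ} (hu : Irrational u) (hv : Irrational v) (h : cfA u = cfA v) :
    u = v := by
  by_contra hne
  have hpos : 0 < |u - v| := abs_pos.2 (sub_ne_zero.2 hne)
  obtain ⟨n, hn⟩ := exists_nat_gt (2 / |u - v| + 1)
  have hq₀ : (0 : ℝ) ≤ cfDen (cfA u) (n + 1) := by
    exact_mod_cast cfDen_nonneg (one_le_cfA_succ hu) n
  have hq : (n : ℝ) ≤ cfDen (cfA u) (n + 1) + 1 := by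
    have := fib_le_cfDen (one_le_cfA_succ hu) n
    have := Nat.le_fib_add_one n
    exact_mod_cast (by omega : (n : ℤ) ≤ cfDen (cfA u) (n + 1) + 1)
  have hv := abs_mul_cfDen_sub_cfNum_le_one hv n
  rw [← h] at hv
  set q : ℝ := (cfDen (cfA u) (n + 1) : ℝ)
  set p : ℝ := (cfNum (cfA u) (n + 1) : ℝ)
  have hclose : |u - v| * q ≤ 2 := by
    calc |u - v| * q = |(u * q - p) - (v * q - p)| := by
          rw [sub_sub_sub_cancel_right, ← sub_mul, abs_mul, abs_of_nonneg hq₀]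
      _ ≤ |u * q - p| + |v * q - p| := abs_sub _ _
      _ ≤ 2 := by linarith [abs_mul_cfDen_sub_cfNum_le_one hu n]
  have : 2 < |u - v| * q := by
    rw [mul_comm, ← div_lt_iff₀ hpos]; linarith
  linarith

def IsQuadratic (t : ℝ) : Prop :=
  ∃ A B C : ℤ, A ≠ 0 ∧ (A : ℝ) * t ^ 2 + B * t + C = 0

theorem Irrational.intCast_mul_add_ne_zero {t : ℝ} (ht : Irrational t) {a : ℤ} (ha : a ≠ 0)
    (b : ℤ) : (a : ℝ) * t + b ≠ 0 :=
  ((ht.intCast_mul ha).add_intCast b).ne_zero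

namespace IsQuadratic

variable {t : ℝ}

theorem intCast_add (h : IsQuadratic t) (m : ℤ) : IsQuadratic (m + t) := by
  obtain ⟨A, B, C, hA, ht⟩ := h
  exact ⟨A, B - 2 * A * m, A * m ^ 2 - B * m + C, hA, by push_cast; linear_combination ht⟩

theorem inv (h : IsQuadratic t) (ht : Irrational t) : IsQuadratic t⁻¹ := by
  obtain ⟨A, B, C, hA, hroot⟩ := h
  have hC : C ≠ 0 := by
    rintro rfl
    have : t * (A * t + B) = 0 := by linear_combination hroot
    exact (mul_ne_zero ht.ne_zero (ht.intCast_mul_add_ne_zero hA B)) this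
  refine ⟨C, B, A, hC, ?_⟩
  field_simp [ht.ne_zero]
  linear_combination hroot

theorem of_cfFrac {x : ℝ} (hx : Irrational x) {n : ℕ} (h : IsQuadratic (cfFrac x n)) :
    IsQuadratic x := by
  induction n with
  | zero =>
    simpa only [cfFrac, Function.iterate_zero_apply, Int.floor_add_fract] using h.intCast_add ⌊x⌋
  | succ n ih =>
    apply ih
    have hz := (h.intCast_add (cfA x (n + 1))).inv (irrational_completeQuot hx (n + 1))
    rwa [← completeQuot, completeQuot_succ hx, one_div, inv_inv] at hz

end IsQuadratic

theorem isQuadratic_of_cfFrac_eq_self {u : ℝ} (hu : Irrational u) {k : ℕ} (hk : 1 ≤ k)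
    (h : cfFrac u k = u) : IsQuadratic u := by
  have hz : completeQuot u k = cfA u k + u := by rw [completeQuot, h]
  have hmob := mul_cfDen_cfA_eq hu k
  obtain ⟨j, rfl⟩ : ∃ j, k = j + 1 := ⟨k - 1, by omega⟩
  refine ⟨cfDen (cfA u) (j + 2),
    cfA u (j + 1) * cfDen (cfA u) (j + 2) + cfDen (cfA u) (j + 1) - cfNum (cfA u) (j + 2),
    -(cfA u (j + 1) * cfNum (cfA u) (j + 2) + cfNum (cfA u) (j + 1)),
    cfDen_ne_zero (one_le_cfA_succ hu) j, ?_⟩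
  rw [hz] at hmob
  push_cast
  linear_combination hmob

theorem isQuadratic_of_eventually_periodic {x : ℝ} (hx : Irrational x) {N k : ℕ} (hN : 1 ≤ N)
    (hk : 1 ≤ k) (hper : ∀ n, N ≤ n → cfA x (n + k) = cfA x n) : IsQuadratic x := by
  obtain ⟨m, rfl⟩ : ∃ m, N = m + 1 := ⟨N - 1, by omega⟩
  have hdigits : cfA (cfFrac x (m + k)) = cfA (cfFrac x m) := by
    funext n
    cases n with
    | zero => rw [cfA_cfFrac_zero, cfA_cfFrac_zero]
    | succ t =>
      rw [cfA_cfFrac_succ, cfA_cfFrac_succ, show m + k + t + 1 = m + t + 1 + k by omega,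
        hper _ (by omega)]
  have hu := irrational_cfFrac hx m
  have hperiodic : cfFrac (cfFrac x m) k = cfFrac x m := by
    rw [cfFrac_cfFrac]
    exact eq_of_cfA_eq (irrational_cfFrac hx _) hu hdigits
  exact (isQuadratic_of_cfFrac_eq_self hu hk hperiodic).of_cfFrac hx

def binQuad (A B C X Y : ℤ) : ℤ := A * X ^ 2 + B * X * Y + C * Y ^ 2

section BinaryQuadraticForm

variable {A B C : ℤ} {x : ℝ}

theorem binQuad_mobius_root (hx : (A : ℝ) * x ^ 2 + B * x + C = 0) {P Q P' Q' : ℤ} {z : ℝ}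
    (hz : x * (Q * z + Q') = P * z + P') :
    (binQuad A B C P Q : ℝ) * z ^ 2
        + (binQuad A B C (P + P') (Q + Q') - binQuad A B C P Q - binQuad A B C P' Q' : ℤ) * z
        + binQuad A B C P' Q' = 0 := by
  unfold binQuad
  push_cast
  linear_combination
    (Q * z + Q') ^ 2 * hx - (A * (P * z + P' + x * (Q * z + Q')) + B * (Q * z + Q')) * hz

theorem binQuad_polar_sq (P Q P' Q' : ℤ) :
    (binQuad A B C (P + P') (Q + Q') - binQuad A B C P Q - binQuad A B C P' Q') ^ 2
      = (B ^ 2 - 4 * A * C) * (P * Q' - P' * Q) ^ 2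
        + 4 * binQuad A B C P Q * binQuad A B C P' Q' := by
  unfold binQuad
  ring

theorem binQuad_ne_zero (hx : Irrational x) (hA : A ≠ 0) (hroot : (A : ℝ) * x ^ 2 + B * x + C = 0)
    (P : ℤ) {Q : ℤ} (hQ : Q ≠ 0) : binQuad A B C P Q ≠ 0 := by
  intro h
  have hfactor : (Q * x + (-P : ℤ)) * ((A * Q : ℤ) * x + (A * P + B * Q : ℤ)) = (0 : ℝ) := by
    have : (binQuad A B C P Q : ℝ) = 0 := by exact_mod_cast h
    unfold binQuad at this
    push_cast at this ⊢
    linear_combination Q ^ 2 * hroot - this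
  exact mul_ne_zero (hx.intCast_mul_add_ne_zero hQ _)
    (hx.intCast_mul_add_ne_zero (mul_ne_zero hA hQ) _) hfactor

theorem abs_binQuad_le (hroot : (A : ℝ) * x ^ 2 + B * x + C = 0) {P Q : ℤ}
    (he : |x * Q - P| ≤ 1) (heQ : |x * Q - P| * |(Q : ℝ)| ≤ 1) :
    |(binQuad A B C P Q : ℝ)| ≤ |(A : ℝ)| + |2 * A * x + B| := by
  set e := x * Q - P
  have hf : (binQuad A B C P Q : ℝ) = A * e ^ 2 - (2 * A * x + B) * (Q * e) := by
    unfold binQuad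
    push_cast
    linear_combination (Q : ℝ) ^ 2 * hroot
  have he2 : |e| ^ 2 ≤ 1 := pow_le_one₀ (abs_nonneg e) he
  rw [hf]
  calc _ ≤ |(A : ℝ) * e ^ 2| + |(2 * A * x + B) * (Q * e)| := abs_sub _ _
    _ = |(A : ℝ)| * |e| ^ 2 + |2 * A * x + B| * (|e| * |(Q : ℝ)|) := by
      rw [abs_mul, abs_mul, abs_mul, abs_pow, mul_comm |(Q : ℝ)|]
    _ ≤ |(A : ℝ)| * 1 + |2 * A * x + B| * 1 := by gcongr
    _ = _ := by ring

end BinaryQuadraticForm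

theorem abs_le_of_sq_eq {b D c c' K : ℤ} (hb : b ^ 2 = D + 4 * c * c') (hc : |c| ≤ K)
    (hc' : |c'| ≤ K) : |b| ≤ |D| + 4 * K ^ 2 := by
  have hcc' : c * c' ≤ K ^ 2 := by
    calc c * c' ≤ |c| * |c'| := by rw [← abs_mul]; exact le_abs_self _
      _ ≤ K ^ 2 := by rw [sq]; exact mul_le_mul hc hc' (abs_nonneg _) ((abs_nonneg _).trans hc)
  calc |b| ≤ b ^ 2 := by rw [← sq_abs]; exact Int.le_self_sq _
    _ ≤ |D| + 4 * K ^ 2 := by linarith [le_abs_self D]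

def quadRootsOfHeightLE (K : ℤ) : Set ℝ :=
  {z | ∃ a b c : ℤ, a ≠ 0 ∧ |a| ≤ K ∧ |b| ≤ K ∧ |c| ≤ K ∧ (a : ℝ) * z ^ 2 + b * z + c = 0}

theorem finite_quadRootsOfHeightLE (K : ℤ) : (quadRootsOfHeightLE K).Finite := by
  have hI := Set.finite_Icc (-K) K
  refine (hI.biUnion fun a _ => hI.biUnion fun b _ => hI.biUnion fun c _ =>
    (?_ : {z : ℝ | a ≠ 0 ∧ (a : ℝ) * z ^ 2 + b * z + c = 0}.Finite)).subset ?_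
  · by_cases ha : a = 0
    · simp [ha]
    open Polynomial in
    have hp : (C (a : ℝ) * X ^ 2 + C (b : ℝ) * X + C (c : ℝ)) ≠ 0 := by
      intro h
      have := congrArg (coeff · 2) h
      simp only [coeff_add, coeff_C_mul, coeff_X_pow, coeff_X, coeff_C, coeff_zero] at this
      norm_num at this
      exact ha this
    exact (finite_setOfPred_isRoot hp).subset fun z hz => by simpa using hz.2
  · rintro z ⟨a, b, c, ha, hA, hB, hC, hz⟩
    simp only [Set.mem_iUnion]
    exact ⟨a, abs_le.1 hA, b, abs_le.1 hB, c, abs_le.1 hC, ha, hz⟩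

theorem exists_lt_cfFrac_eq_of_quadratic {x : ℝ} (hx : Irrational x) {A B C : ℤ} (hA : A ≠ 0)
    (hroot : (A : ℝ) * x ^ 2 + B * x + C = 0) : ∃ i j, i < j ∧ cfFrac x i = cfFrac x j := by
  set f := binQuad A B C
  set p := cfNum (cfA x)
  set q := cfDen (cfA x)
  set K := ⌊|(A : ℝ)| + |2 * A * x + B|⌋
  have hf : ∀ n, |f (p (n + 1)) (q (n + 1))| ≤ K := fun n => by
    have hq : |(q (n + 1) : ℝ)| = q (n + 1) :=
      abs_of_nonneg (by exact_mod_cast cfDen_nonneg (one_le_cfA_succ hx) n)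
    rw [Int.le_floor, Int.cast_abs]
    exact abs_binQuad_le hroot (abs_mul_cfDen_sub_cfNum_le_one hx n)
      (by rw [hq]; exact abs_mul_cfDen_sub_cfNum_mul_cfDen_le_one hx n)
  set L := max K (|B ^ 2 - 4 * A * C| + 4 * K ^ 2)
  have hmem : ∀ n, completeQuot x (n + 1) ∈ quadRootsOfHeightLE L := by
    intro n
    have hdet : (p (n + 2) * q (n + 1) - p (n + 1) * q (n + 2)) ^ 2 = 1 := by
      rw [cfNum_succ_mul_cfDen_sub, ← pow_mul, mul_comm, pow_mul, neg_one_sq, one_pow]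
    refine ⟨_, _, _, binQuad_ne_zero hx hA hroot _ (cfDen_ne_zero (one_le_cfA_succ hx) n),
      (hf (n + 1)).trans (le_max_left _ _), ?_, (hf n).trans (le_max_left _ _),
      binQuad_mobius_root hroot (mul_cfDen_cfA_eq hx (n + 1))⟩
    refine le_trans ?_ (le_max_right _ _)
    exact abs_le_of_sq_eq (by rw [binQuad_polar_sq, hdet, mul_one]) (hf (n + 1)) (hf n)
  obtain ⟨i, j, hij, hz⟩ := (finite_quadRootsOfHeightLE L).exists_lt_map_eq_of_forall_mem hmem
  exact ⟨i + 1, j + 1, by omega, by rw [← fract_completeQuot, hz, fract_completeQuot]⟩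

/-- Lagrange's theorem: an irrational real number has an eventually periodic regular
continued fraction expansion iff it is a quadratic irrational. -/
theorem lagrange_periodic_iff_quadratic (x : ℝ) (hx : Irrational x) :
    (∃ N : ℕ, 1 ≤ N ∧ ∃ k : ℕ, 1 ≤ k ∧ ∀ n : ℕ, N ≤ n → cfA x (n + k) = cfA x n) ↔
      ∃ A B C : ℤ, A ≠ 0 ∧ (A : ℝ) * x ^ 2 + (B : ℝ) * x + (C : ℝ) = 0 := by
  constructor
  · rintro ⟨N, hN, k, hk, hper⟩
    exact isQuadratic_of_eventually_periodic hx hN hk hper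
  · rintro ⟨A, B, C, hA, hroot⟩
    obtain ⟨i, j, hij, hfrac⟩ := exists_lt_cfFrac_eq_of_quadratic hx hA hroot
    refine ⟨i + 1, by omega, j - i, by omega, fun n hn => ?_⟩
    obtain ⟨t, rfl⟩ : ∃ t, n = i + t + 1 := ⟨n - i - 1, by omega⟩
    rw [show i + t + 1 + (j - i) = j + t + 1 by omega]
    exact (cfA_add_eq_of_cfFrac_eq hfrac t).symm
end

section
/- An irrational real number x is a quadratic irrational if and only if there exists a matrix M = [[a,b],[c,d]] ∈ SL(2,ℤ) with |a + d| > 2 whose fractional linear action fixes x, i.e. (a x + b)/(c x + d) = x. (Such M are the hyperbolic elements of the modular group; their fixed irrational points on ℝ correspond to the closed geodesics of the modular surface.) -/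
/-!
If `x` is an irrational root of `A X² + B X + C` with `A ≠ 0`, its discriminant `D` is positive
and not a square, so Pell's equation `p² - D q² = 1` has a solution with `q ≠ 0`. The matrix
`[[p - Bq, -2Cq], [2Aq, p + Bq]]` then has determinant `p² - D q² = 1` and trace `2p` with
`|p| ≥ 2`, and it fixes `x` because the fixed points of `[[a, b], [c, d]]` are the roots of
`c X² + (d - a) X - b`, here `2q (A X² + B X + C)`. Conversely this fixed-point equation is a
genuine quadratic unless `c = 0`, and `c = 0` forces `a = d = ±1`, i.e. trace `±2`.
-/

open Matrix Function

noncomputable def moebius (M : SpecialLinearGroup (Fin 2) ℤ) (x : ℝ) : ℝ :=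
  ((M 0 0 : ℝ) * x + M 0 1) / ((M 1 0 : ℝ) * x + M 1 1)

theorem Irrational.intCast_mul_add_intCast_ne_zero {x : ℝ} (hx : Irrational x) {c : ℤ}
    (hc : c ≠ 0) (d : ℤ) : (c : ℝ) * x + d ≠ 0 :=
  ((hx.intCast_mul hc).add_intCast d).ne_zero

theorem mul_add_div_mul_add_eq_self_iff {K : Type*} [Field K] {a b c d x : K} (h : c * x + d ≠ 0) :
    (a * x + b) / (c * x + d) = x ↔ c * x ^ 2 + (d - a) * x - b = 0 := by
  rw [div_eq_iff h]
  constructor <;> intro e <;> linear_combination -e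

section QuadraticRoot

variable {A B C : ℤ} {x : ℝ}

theorem discrim_nonneg_of_real_root (hroot : (A : ℝ) * x ^ 2 + B * x + C = 0) :
    0 ≤ discrim A B C := by
  have hsq : ((discrim A B C : ℤ) : ℝ) = (2 * A * x + B) ^ 2 := by
    push_cast [discrim]
    linear_combination -4 * (A : ℝ) * hroot
  exact_mod_cast hsq ▸ sq_nonneg _

theorem Irrational.not_isSquare_discrim (hx : Irrational x) (hA : A ≠ 0)
    (hroot : (A : ℝ) * x ^ 2 + B * x + C = 0) : ¬IsSquare (discrim A B C) := by
  rintro ⟨r, hr⟩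
  have hr' : (B : ℝ) ^ 2 - 4 * A * C = r * r := by
    rw [discrim] at hr
    exact_mod_cast hr
  have hfactor : (2 * A * x + B - r) * (2 * A * x + B + r) = 0 := by
    linear_combination 4 * (A : ℝ) * hroot + hr'
  have h2A : 2 * A ≠ 0 := mul_ne_zero two_ne_zero hA
  rcases mul_eq_zero.mp hfactor with h | h
  · exact hx.intCast_mul_add_intCast_ne_zero h2A (B - r) (by push_cast; linear_combination h)
  · exact hx.intCast_mul_add_intCast_ne_zero h2A (B + r) (by push_cast; linear_combination h)

theorem Irrational.discrim_pos (hx : Irrational x) (hA : A ≠ 0)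
    (hroot : (A : ℝ) * x ^ 2 + B * x + C = 0) : 0 < discrim A B C :=
  (discrim_nonneg_of_real_root hroot).lt_of_ne fun h ↦
    hx.not_isSquare_discrim hA hroot (h ▸ IsSquare.zero)

end QuadraticRoot

/-- The automorph of the binary form `A X² + B XY + C Y²` given by the Pell solution `(p, q)`. -/
def pellAutomorph (A B C p q : ℤ) (hpell : p ^ 2 - discrim A B C * q ^ 2 = 1) :
    SpecialLinearGroup (Fin 2) ℤ :=
  ⟨!![p - B * q, -(2 * C * q); 2 * A * q, p + B * q], by
    rw [det_fin_two_of]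
    unfold discrim at hpell
    linear_combination hpell⟩

section PellAutomorph

variable {A B C p q : ℤ} (hpell : p ^ 2 - discrim A B C * q ^ 2 = 1)

theorem two_lt_abs_trace_pellAutomorph (hD : 0 < discrim A B C) (hq : q ≠ 0) :
    2 < |(pellAutomorph A B C p q hpell : Matrix (Fin 2) (Fin 2) ℤ).trace| := by
  have hp : 1 < |p| := by
    rw [← one_lt_sq_iff_one_lt_abs]
    nlinarith [mul_pos hD (sq_pos_of_ne_zero hq)]
  rw [trace_fin_two]
  change 2 < |p - B * q + (p + B * q)|
  rw [show p - B * q + (p + B * q) = 2 * p by ring, abs_mul, abs_two]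
  linarith

theorem Irrational.isFixedPt_moebius_pellAutomorph {x : ℝ} (hx : Irrational x) (hA : A ≠ 0)
    (hq : q ≠ 0) (hroot : (A : ℝ) * x ^ 2 + B * x + C = 0) :
    IsFixedPt (moebius (pellAutomorph A B C p q hpell)) x := by
  have hden : ((2 * A * q : ℤ) : ℝ) * x + (p + B * q : ℤ) ≠ 0 :=
    hx.intCast_mul_add_intCast_ne_zero (by simp [hA, hq]) _
  simp only [IsFixedPt, moebius, pellAutomorph, of_apply, cons_val', cons_val_zero,
    cons_val_one, empty_val', cons_val_fin_one]
  rw [mul_add_div_mul_add_eq_self_iff hden]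
  push_cast
  linear_combination 2 * (q : ℝ) * hroot

end PellAutomorph

theorem Irrational.exists_isFixedPt_moebius_of_root {A B C : ℤ} {x : ℝ} (hx : Irrational x)
    (hA : A ≠ 0) (hroot : (A : ℝ) * x ^ 2 + B * x + C = 0) :
    ∃ M : SpecialLinearGroup (Fin 2) ℤ,
      2 < |(M : Matrix (Fin 2) (Fin 2) ℤ).trace| ∧ IsFixedPt (moebius M) x := by
  obtain ⟨p, q, hpell, hq⟩ :=
    Pell.exists_of_not_isSquare (hx.discrim_pos hA hroot) (hx.not_isSquare_discrim hA hroot)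
  exact ⟨pellAutomorph A B C p q hpell, two_lt_abs_trace_pellAutomorph hpell
    (hx.discrim_pos hA hroot) hq, hx.isFixedPt_moebius_pellAutomorph hpell hA hq hroot⟩

theorem lower_left_ne_zero_of_two_lt_abs_trace (M : SpecialLinearGroup (Fin 2) ℤ)
    (htr : 2 < |(M : Matrix (Fin 2) (Fin 2) ℤ).trace|) : M 1 0 ≠ 0 := by
  intro hc
  have hdet : M 0 0 * M 1 1 = 1 := by
    have := M.det_coe
    rwa [det_fin_two, hc, mul_zero, sub_zero] at this
  rw [trace_fin_two] at htr
  rcases Int.eq_one_or_neg_one_of_mul_eq_one' hdet with ⟨ha, hd⟩ | ⟨ha, hd⟩ <;>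
    simp [ha, hd] at htr

theorem Irrational.exists_root_of_isFixedPt_moebius {M : SpecialLinearGroup (Fin 2) ℤ} {x : ℝ}
    (hx : Irrational x) (htr : 2 < |(M : Matrix (Fin 2) (Fin 2) ℤ).trace|)
    (hfix : IsFixedPt (moebius M) x) :
    ∃ A B C : ℤ, A ≠ 0 ∧ (A : ℝ) * x ^ 2 + B * x + C = 0 := by
  have hc := lower_left_ne_zero_of_two_lt_abs_trace M htr
  rw [IsFixedPt, moebius, mul_add_div_mul_add_eq_self_iff (hx.intCast_mul_add_intCast_ne_zero hc _)] at hfix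
  exact ⟨M 1 0, M 1 1 - M 0 0, -M 0 1, hc, by push_cast; linear_combination hfix⟩

/-- An irrational real number is a quadratic irrational iff it is fixed by the
fractional linear action of a hyperbolic element of `SL(2,ℤ)` (an element of trace
of absolute value greater than `2`). -/
theorem quadratic_irrational_iff_fixed_by_hyperbolic (x : ℝ) (hx : Irrational x) :
    (∃ A B C : ℤ, A ≠ 0 ∧ (A : ℝ) * x ^ 2 + (B : ℝ) * x + (C : ℝ) = 0) ↔
      ∃ M : Matrix.SpecialLinearGroup (Fin 2) ℤ,
        2 < |M 0 0 + M 1 1| ∧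
        ((M 0 0 : ℝ) * x + (M 0 1 : ℝ)) / ((M 1 0 : ℝ) * x + (M 1 1 : ℝ)) = x := by
  refine ⟨fun ⟨A, B, C, hA, hroot⟩ ↦ ?_, fun ⟨M, htr, hfix⟩ ↦ ?_⟩
  · obtain ⟨M, htr, hfix⟩ := hx.exists_isFixedPt_moebius_of_root hA hroot
    exact ⟨M, by rwa [trace_fin_two] at htr, hfix⟩
  · exact hx.exists_root_of_isFixedPt_moebius (by rwa [trace_fin_two]) hfix
end

section
/- The natural extension of the Gauss map preserves the measure with density 1/(1+xy)²: the map T̄ on (0,1)² defined (for x irrational) by T̄(x,y) = (1/x − ⌊1/x⌋, 1/(⌊1/x⌋ + y)) is measure-preserving with respect to the Borel measure on (0,1)² with density (x,y) ↦ 1/(1+xy)² with respect to two-dimensional Lebesgue measure. -/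
open MeasureTheory

/-- The natural extension of the Gauss map on the unit square:
`T̄(x,y) = (1/x - ⌊1/x⌋, 1/(⌊1/x⌋ + y))`. -/
noncomputable def gaussNatExt : ℝ × ℝ → ℝ × ℝ :=
  fun p => (Int.fract (1 / p.1), 1 / ((⌊1 / p.1⌋ : ℝ) + p.2))

/-- The measure on `(0,1)²` with density `(x,y) ↦ 1/(1+xy)²` with respect to
two-dimensional Lebesgue measure. -/
noncomputable def natExtMeasure : Measure (ℝ × ℝ) :=
  (volume.restrict ((Set.Ioo (0 : ℝ) 1) ×ˢ (Set.Ioo (0 : ℝ) 1))).withDensity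
    fun p => ENNReal.ofReal (1 / (1 + p.1 * p.2) ^ 2)

/-!
On the strip `1/(k+1) < x < 1/k` of the unit square, `T̄` is the map
`(x, y) ↦ (1/x - k, 1/(k + y))`, a product of two monotone diffeomorphisms onto the strip
`(0,1) × (1/(k+1), 1/k)`, with Jacobian `1/(x²(k+y)²)`. Since
`1 + (1/x - k) / (k + y) = (1 + xy) / (x(k + y))`, the density `1/(1+xy)²` is pulled back to
itself on each strip. The strips and their images both partition the square up to the null lines
`x = 1/k`, resp. `y = 1/k`, so summing over `k` gives the invariance.
-/

open Set Function
open scoped ENNReal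

theorem lintegral_image_prodMap_eq {f g f' g' : ℝ → ℝ} {s t : Set ℝ}
    (hs : MeasurableSet s) (ht : MeasurableSet t)
    (hf : ∀ x ∈ s, HasDerivWithinAt f (f' x) s x) (hg : ∀ y ∈ t, HasDerivWithinAt g (g' y) t y)
    (hf_inj : InjOn f s) (hg_inj : InjOn g t) (φ : ℝ × ℝ → ℝ≥0∞) :
    ∫⁻ q in (f '' s) ×ˢ (g '' t), φ q =
      ∫⁻ p in s ×ˢ t, ENNReal.ofReal |f' p.1 * g' p.2| * φ (Prod.map f g p) := by
  have hderiv : ∀ p ∈ s ×ˢ t, HasFDerivWithinAt (Prod.map f g)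
      ((ContinuousLinearMap.smulRight 1 (f' p.1)).prodMap
        (ContinuousLinearMap.smulRight 1 (g' p.2))) (s ×ˢ t) p := fun p hp =>
    HasFDerivWithinAt.prodMap p
      ((hf p.1 hp.1).hasFDerivWithinAt.mono (fst_image_prod_subset s t))
      ((hg p.2 hp.2).hasFDerivWithinAt.mono (snd_image_prod_subset s t))
  rw [← prodMap_image_prod, lintegral_image_eq_lintegral_abs_det_fderiv_mul volume
    (hs.prod ht) hderiv (hf_inj.prodMap hg_inj)]
  congr! 4 with p
  rw [ContinuousLinearMap.det, ContinuousLinearMap.coe_prodMap, LinearMap.det_prodMap]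
  simp

/-- The interval `(1/(n+2), 1/(n+1))`, on which the first continued fraction digit `⌊1/x⌋` is
`n + 1`. -/
def digitInterval (n : ℕ) : Set ℝ := (·⁻¹) ⁻¹' Ioo ((n : ℝ) + 1) (n + 2)

theorem measurableSet_digitInterval (n : ℕ) : MeasurableSet (digitInterval n) :=
  measurable_inv measurableSet_Ioo

theorem pairwise_disjoint_digitInterval : Pairwise (Disjoint on digitInterval) := by
  intro m n hmn
  refine Disjoint.preimage _ ?_
  have := pairwise_disjoint_Ioo_intCast ℝ (show (m : ℤ) + 1 ≠ n + 1 by omega)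
  simpa [onFun, add_assoc, one_add_one_eq_two] using this

theorem digitInterval_subset_Ioo (n : ℕ) : digitInterval n ⊆ Ioo 0 1 := by
  intro x ⟨hx, _⟩
  have hx0 : 0 < x := inv_pos.1 ((by positivity : (0:ℝ) < n + 1).trans hx)
  exact ⟨hx0, (one_lt_inv₀ hx0).1 (by linarith [n.cast_nonneg (α := ℝ)])⟩

theorem Ioo_diff_iUnion_digitInterval_subset :
    Ioo (0 : ℝ) 1 \ ⋃ n, digitInterval n ⊆ range fun m : ℕ => (m : ℝ)⁻¹ := by
  rintro x ⟨⟨hx0, hx1⟩, hx⟩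
  simp only [digitInterval, mem_iUnion, mem_preimage, mem_Ioo, not_exists, not_and,
    not_lt] at hx
  obtain ⟨k, hk⟩ : ∃ k, ⌊x⁻¹⌋₊ = k + 1 :=
    Nat.exists_eq_add_of_le' (Nat.le_floor (by simpa using ((one_lt_inv₀ hx0).2 hx1).le))
  have hle : (k : ℝ) + 1 ≤ x⁻¹ := by exact_mod_cast hk ▸ Nat.floor_le (inv_pos.2 hx0).le
  have hlt : x⁻¹ < (k : ℝ) + 2 := by
    have := Nat.lt_floor_add_one x⁻¹
    rw [hk] at this
    push_cast at this
    linarith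
  have hinv : x⁻¹ = k + 1 := le_antisymm (not_lt.1 fun h => (hx k h).not_gt hlt) hle
  exact ⟨k + 1, by push_cast; rw [← hinv, inv_inv]⟩

theorem volume_restrict_Ioo_eq_sum_digitInterval :
    volume.restrict (Ioo (0 : ℝ) 1) = Measure.sum fun n => volume.restrict (digitInterval n) := by
  rw [← Measure.restrict_iUnion pairwise_disjoint_digitInterval measurableSet_digitInterval]
  refine Measure.restrict_congr_set (ae_eq_set.2 ⟨?_, ?_⟩)
  · exact measure_mono_null Ioo_diff_iUnion_digitInterval_subset
      ((countable_range _).measure_zero volume)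
  · rw [sdiff_eq_empty.2 (iUnion_subset digitInterval_subset_Ioo), measure_empty]

theorem volume_restrict_Ioo_prod_Ioo_eq_sum_left :
    volume.restrict (Ioo (0 : ℝ) 1 ×ˢ Ioo (0 : ℝ) 1) =
      Measure.sum fun n => volume.restrict (digitInterval n ×ˢ Ioo 0 1) := by
  simp_rw [Measure.volume_eq_prod, ← Measure.prod_restrict,
    volume_restrict_Ioo_eq_sum_digitInterval, Measure.prod_sum_left]

theorem volume_restrict_Ioo_prod_Ioo_eq_sum_right :
    volume.restrict (Ioo (0 : ℝ) 1 ×ˢ Ioo (0 : ℝ) 1) =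
      Measure.sum fun n => volume.restrict (Ioo 0 1 ×ˢ digitInterval n) := by
  simp_rw [Measure.volume_eq_prod, ← Measure.prod_restrict,
    volume_restrict_Ioo_eq_sum_digitInterval, Measure.prod_sum_right]

noncomputable def gaussBranch (n : ℕ) : ℝ × ℝ → ℝ × ℝ :=
  Prod.map (fun x => x⁻¹ - ((n : ℝ) + 1)) (fun y => ((n : ℝ) + 1 + y)⁻¹)

theorem gaussNatExt_eqOn_gaussBranch (n : ℕ) :
    EqOn gaussNatExt (gaussBranch n) (digitInterval n ×ˢ Ioo 0 1) := by
  rintro ⟨x, y⟩ ⟨⟨hx1, hx2⟩, -⟩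
  have hfloor : ⌊x⁻¹⌋ = (n : ℤ) + 1 :=
    Int.floor_eq_iff.2 ⟨by push_cast; exact hx1.le, by push_cast; linarith⟩
  simp [gaussNatExt, gaussBranch, Int.fract, hfloor]

theorem image_inv_sub_digitInterval (n : ℕ) :
    (fun x => x⁻¹ - ((n : ℝ) + 1)) '' digitInterval n = Ioo 0 1 := by
  rw [← image_image (· - ((n : ℝ) + 1)), digitInterval, image_preimage_eq _ inv_surjective,
    image_sub_const_Ioo]
  ring_nf

theorem image_inv_add_Ioo (n : ℕ) :
    (fun y => ((n : ℝ) + 1 + y)⁻¹) '' Ioo 0 1 = digitInterval n := by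
  rw [← image_image (·⁻¹), image_const_add_Ioo, image_inv_eq_inv, digitInterval, inv_preimage]
  ring_nf

theorem measurable_gaussNatExt : Measurable gaussNatExt := by
  unfold gaussNatExt
  fun_prop

noncomputable def natExtDensity (p : ℝ × ℝ) : ℝ≥0∞ := ENNReal.ofReal (1 / (1 + p.1 * p.2) ^ 2)

theorem natExtMeasure_def :
    natExtMeasure = (volume.restrict (Ioo 0 1 ×ˢ Ioo 0 1)).withDensity natExtDensity := rfl

theorem lintegral_Ioo_prod_digitInterval (n : ℕ) (φ : ℝ × ℝ → ℝ≥0∞) :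
    ∫⁻ q in Ioo 0 1 ×ˢ digitInterval n, φ q =
      ∫⁻ p in digitInterval n ×ˢ Ioo 0 1,
        ENNReal.ofReal |-(p.1 ^ 2)⁻¹ * -(((n : ℝ) + 1 + p.2) ^ 2)⁻¹| * φ (gaussBranch n p) := by
  set c : ℝ := n + 1
  have hf : ∀ x ∈ digitInterval n,
      HasDerivWithinAt (fun x => x⁻¹ - c) (-(x ^ 2)⁻¹) (digitInterval n) x := fun x hx =>
    ((hasDerivAt_inv (digitInterval_subset_Ioo n hx).1.ne').sub_const c).hasDerivWithinAt
  have hg : ∀ y ∈ Ioo (0 : ℝ) 1,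
      HasDerivWithinAt (fun y => (c + y)⁻¹) (-((c + y) ^ 2)⁻¹) (Ioo 0 1) y := by
    intro y hy
    have hy0 : c + y ≠ 0 := by positivity [hy.1]
    exact ((hasDerivAt_inv hy0).comp_const_add c y).hasDerivWithinAt
  have h := lintegral_image_prodMap_eq (measurableSet_digitInterval n) measurableSet_Ioo hf hg
    (fun a _ b _ hab => inv_injective (sub_left_injective hab))
    (fun a _ b _ hab => add_right_injective c (inv_injective hab)) φ
  rwa [image_inv_sub_digitInterval, image_inv_add_Ioo] at h

theorem abs_jacobian_mul_natExtDensity_gaussBranch {n : ℕ} {p : ℝ × ℝ}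
    (hp : p ∈ digitInterval n ×ˢ Ioo 0 1) :
    ENNReal.ofReal |-(p.1 ^ 2)⁻¹ * -(((n : ℝ) + 1 + p.2) ^ 2)⁻¹| *
      natExtDensity (gaussBranch n p) = natExtDensity p := by
  obtain ⟨x, y⟩ := p
  obtain ⟨hx, hy, -⟩ := hp
  have hx0 : 0 < x := (digitInterval_subset_Ioo n hx).1
  have hy0 : 0 < (n : ℝ) + 1 + y := by positivity
  have hkey : 1 + (x⁻¹ - ((n : ℝ) + 1)) * ((n : ℝ) + 1 + y)⁻¹ =
      (1 + x * y) / (x * ((n : ℝ) + 1 + y)) := by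
    field_simp
    ring
  rw [natExtDensity, natExtDensity, ← ENNReal.ofReal_mul (abs_nonneg _)]
  simp only [gaussBranch, Prod.map, hkey]
  congr 1
  rw [neg_mul_neg, abs_of_pos (by positivity)]
  field_simp

theorem map_gaussNatExt_withDensity_strip (n : ℕ) :
    ((volume.restrict (digitInterval n ×ˢ Ioo 0 1)).withDensity natExtDensity).map gaussNatExt =
      (volume.restrict (Ioo 0 1 ×ˢ digitInterval n)).withDensity natExtDensity := by
  ext s hs
  have hpre : MeasurableSet (gaussNatExt ⁻¹' s) := measurable_gaussNatExt hs
  rw [Measure.map_apply measurable_gaussNatExt hs, withDensity_apply _ hpre,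
    withDensity_apply _ hs, ← lintegral_indicator hpre, ← lintegral_indicator hs,
    lintegral_Ioo_prod_digitInterval]
  refine setLIntegral_congr_fun ((measurableSet_digitInterval n).prod measurableSet_Ioo)
    fun p hp => ?_
  have hmem : p ∈ gaussNatExt ⁻¹' s ↔ gaussBranch n p ∈ s := by
    rw [mem_preimage, gaussNatExt_eqOn_gaussBranch n hp]
  by_cases h : gaussBranch n p ∈ s
  · rw [indicator_of_mem (hmem.2 h), indicator_of_mem h,
      abs_jacobian_mul_natExtDensity_gaussBranch hp]
  · rw [indicator_of_notMem (mt hmem.1 h), indicator_of_notMem h, mul_zero]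

/-- The natural extension of the Gauss map preserves the measure with density
`1/(1+xy)²` on the unit square. -/
theorem gaussNatExt_measurePreserving :
    MeasurePreserving gaussNatExt natExtMeasure natExtMeasure := by
  refine ⟨measurable_gaussNatExt, ?_⟩
  calc natExtMeasure.map gaussNatExt
      = (Measure.sum fun n => (volume.restrict (digitInterval n ×ˢ Ioo 0 1)).withDensity
          natExtDensity).map gaussNatExt := by
        rw [natExtMeasure_def, volume_restrict_Ioo_prod_Ioo_eq_sum_left, withDensity_sum]
    _ = Measure.sum fun n => (volume.restrict (Ioo 0 1 ×ˢ digitInterval n)).withDensity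
          natExtDensity := by
        simp_rw [Measure.map_sum measurable_gaussNatExt.aemeasurable,
          map_gaussNatExt_withDensity_strip]
    _ = natExtMeasure := by
        rw [natExtMeasure_def, volume_restrict_Ioo_prod_Ioo_eq_sum_right, withDensity_sum]
end

section
/- Hurwitz's theorem: for every irrational real number x there exist infinitely many rational numbers p/q (p ∈ ℤ, q ∈ ℕ₊, gcd(p,q) = 1) such that |x − p/q| < 1/(√5 · q²). -/
/-!
Let `αₙ` be the complete quotients and `pₙ/qₙ` the convergents of the continued fraction of `x`.
Then `|x - pₙ/qₙ| = 1 / (qₙ² λₙ)` with `λₙ = αₙ₊₁ + qₙ₋₁/qₙ`, so `pₙ/qₙ` satisfies Hurwitz's bound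
exactly when `√5 < λₙ`. With `a = αₙ₊₂` and `b = qₙ/qₙ₊₁` one has `λₙ₊₁ = a + b` and
`λₙ = a⁻¹ + b⁻¹`; if both are at most `√5`, then `1 = a a⁻¹ ≤ (√5 - b)(√5 - b⁻¹)` gives
`b + b⁻¹ ≤ √5`, hence `φ⁻¹ ≤ b`. Three consecutive failures would therefore give
`φ⁻¹ ≤ qₙ₊₁/qₙ₊₂ = (aₙ₊₂ + qₙ/qₙ₊₁)⁻¹ ≤ (1 + φ⁻¹)⁻¹ = φ⁻¹`, so the rational number `qₙ₊₁/qₙ₊₂`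
would equal the irrational `φ⁻¹`. Hence among any three consecutive convergents one satisfies the
bound.
-/

open Real
open scoped goldenRatio

namespace Hurwitz

theorem inv_goldenRatio_le_of_add_le_sqrt_five {a b : ℝ} (ha : 0 < a) (hb : 0 < b)
    (h : a + b ≤ √5) (h' : a⁻¹ + b⁻¹ ≤ √5) : φ⁻¹ ≤ b := by
  have h5 : √5 ^ 2 = 5 := sq_sqrt (by norm_num)
  have hab : 1 ≤ (√5 - b) * (√5 - b⁻¹) := by
    calc (1 : ℝ) = a * a⁻¹ := (mul_inv_cancel₀ ha.ne').symm
      _ ≤ (√5 - b) * (√5 - b⁻¹) :=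
        mul_le_mul (by linarith) (by linarith) (by positivity) (by linarith)
  have hbb : b * b⁻¹ = 1 := mul_inv_cancel₀ hb.ne'
  have hsum : b + b⁻¹ ≤ √5 := by
    refine le_of_mul_le_mul_left ?_ (sqrt_pos.mpr (by norm_num : (0 : ℝ) < 5))
    nlinarith
  have hquad : b ^ 2 + 1 ≤ √5 * b := by nlinarith
  rw [inv_goldenRatio, goldenConj]
  nlinarith [sqrt_nonneg 5]

/-- For partial quotients `a`, `contSeq a 1 (a 0) (n + 1) / contSeq a 0 1 (n + 1)` is the
`n`-th convergent `pₙ/qₙ`; index `0` holds `p₋₁ = 1` and `q₋₁ = 0`. -/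
def contSeq (a : ℕ → ℤ) (s₀ s₁ : ℤ) : ℕ → ℤ
  | 0 => s₀
  | 1 => s₁
  | n + 2 => a (n + 1) * contSeq a s₀ s₁ (n + 1) + contSeq a s₀ s₁ n

section contSeq

variable (a : ℕ → ℤ)

theorem contSeq_add_two (s₀ s₁ : ℤ) (n : ℕ) :
    contSeq a s₀ s₁ (n + 2) = a (n + 1) * contSeq a s₀ s₁ (n + 1) + contSeq a s₀ s₁ n :=
  rfl

theorem contSeq_det (u₀ u₁ v₀ v₁ : ℤ) (n : ℕ) :
    contSeq a u₀ u₁ (n + 1) * contSeq a v₀ v₁ n - contSeq a u₀ u₁ n * contSeq a v₀ v₁ (n + 1) =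
      (-1) ^ n * (u₁ * v₀ - u₀ * v₁) := by
  induction n with
  | zero => simp [contSeq]
  | succ n ih =>
    rw [contSeq_add_two, contSeq_add_two, pow_succ]
    linear_combination (-1 : ℤ) * ih

variable {a}

theorem one_le_contSeq_zero_one (ha : ∀ n, 1 ≤ a (n + 1)) : ∀ n, 1 ≤ contSeq a 0 1 (n + 1)
  | 0 => le_rfl
  | 1 => by simpa [contSeq] using ha 0
  | n + 2 => by
    have h₁ : 1 ≤ contSeq a 0 1 (n + 2) := one_le_contSeq_zero_one ha (n + 1)
    have h₀ : 1 ≤ contSeq a 0 1 (n + 1) := one_le_contSeq_zero_one ha n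
    have := mul_le_mul_of_nonneg_right (ha (n + 1)) (zero_le_one.trans h₁)
    rw [contSeq_add_two]
    linarith

theorem contSeq_zero_one_nonneg (ha : ∀ n, 1 ≤ a (n + 1)) : ∀ n, 0 ≤ contSeq a 0 1 n
  | 0 => le_rfl
  | n + 1 => zero_le_one.trans (one_le_contSeq_zero_one ha n)

theorem strictMono_contSeq_zero_one (ha : ∀ n, 1 ≤ a (n + 1)) :
    StrictMono fun n => contSeq a 0 1 (n + 2) := by
  refine strictMono_nat_of_lt_succ fun n => ?_
  have h₂ : 1 ≤ contSeq a 0 1 (n + 2) := one_le_contSeq_zero_one ha (n + 1)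
  have h₁ : 1 ≤ contSeq a 0 1 (n + 1) := one_le_contSeq_zero_one ha n
  have := mul_le_mul_of_nonneg_right (ha (n + 1)) (zero_le_one.trans h₂)
  show contSeq a 0 1 (n + 2) < contSeq a 0 1 (n + 1 + 2)
  rw [contSeq_add_two a 0 1 (n + 1)]
  linarith

end contSeq

noncomputable def completeQuot (x : ℝ) : ℕ → ℝ
  | 0 => x
  | n + 1 => (Int.fract (completeQuot x n))⁻¹

noncomputable def partialQuot (x : ℝ) (n : ℕ) : ℤ := ⌊completeQuot x n⌋

theorem completeQuot_eq_partialQuot_add_inv (x : ℝ) (n : ℕ) :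
    completeQuot x n = partialQuot x n + (completeQuot x (n + 1))⁻¹ := by
  rw [completeQuot, inv_inv, partialQuot, Int.fract]
  ring

noncomputable def convNum (x : ℝ) : ℕ → ℤ := contSeq (partialQuot x) 1 (partialQuot x 0)

noncomputable def convDen (x : ℝ) : ℕ → ℤ := contSeq (partialQuot x) 0 1

theorem convNum_mul_convDen_sub (x : ℝ) (n : ℕ) :
    convNum x (n + 1) * convDen x n - convNum x n * convDen x (n + 1) = (-1) ^ (n + 1) :=
  (contSeq_det _ 1 _ 0 1 n).trans (by ring)

theorem isCoprime_convNum_convDen (x : ℝ) (n : ℕ) :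
    IsCoprime (convNum x (n + 1)) (convDen x (n + 1)) := by
  have hdet := convNum_mul_convDen_sub x n
  rcases neg_one_pow_eq_or ℤ (n + 1) with h | h <;> rw [h] at hdet
  · exact ⟨convDen x n, -convNum x n, by linear_combination hdet⟩
  · exact ⟨-convDen x n, convNum x n, by linear_combination -hdet⟩

noncomputable def denRatio (x : ℝ) (n : ℕ) : ℝ := convDen x n / convDen x (n + 1)

noncomputable def approxFactor (x : ℝ) (n : ℕ) : ℝ := completeQuot x (n + 1) + denRatio x n

section irrational

variable {x : ℝ}

theorem irrational_completeQuot (hx : Irrational x) : ∀ n, Irrational (completeQuot x n)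
  | 0 => hx
  | n + 1 => ((irrational_completeQuot hx n).sub_intCast _).inv

theorem one_lt_completeQuot_succ (hx : Irrational x) (n : ℕ) : 1 < completeQuot x (n + 1) := by
  have hfract : 0 < Int.fract (completeQuot x n) :=
    Int.fract_pos.mpr ((irrational_completeQuot hx n).ne_int _)
  exact (one_lt_inv₀ hfract).mpr (Int.fract_lt_one _)

theorem one_le_partialQuot_succ (hx : Irrational x) (n : ℕ) : 1 ≤ partialQuot x (n + 1) :=
  Int.le_floor.mpr (by exact_mod_cast (one_lt_completeQuot_succ hx n).le)

theorem convDen_pos (hx : Irrational x) (n : ℕ) : (0 : ℝ) < convDen x (n + 1) := by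
  exact_mod_cast one_le_contSeq_zero_one (one_le_partialQuot_succ hx) n

theorem convDen_nonneg (hx : Irrational x) (n : ℕ) : (0 : ℝ) ≤ convDen x n := by
  exact_mod_cast contSeq_zero_one_nonneg (one_le_partialQuot_succ hx) n

theorem completeQuot_mul_contSeq_add (hx : Irrational x) (s₀ s₁ : ℤ) (n : ℕ) :
    completeQuot x (n + 2) * contSeq (partialQuot x) s₀ s₁ (n + 2) +
        contSeq (partialQuot x) s₀ s₁ (n + 1) =
      completeQuot x (n + 2) *
        (completeQuot x (n + 1) * contSeq (partialQuot x) s₀ s₁ (n + 1) +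
          contSeq (partialQuot x) s₀ s₁ n) := by
  have hα : completeQuot x (n + 2) ≠ 0 :=
    (zero_lt_one.trans (one_lt_completeQuot_succ hx (n + 1))).ne'
  rw [contSeq_add_two, completeQuot_eq_partialQuot_add_inv x (n + 1)]
  push_cast
  field_simp
  ring

theorem mul_completeQuot_mul_convDen_add (hx : Irrational x) (n : ℕ) :
    x * (completeQuot x (n + 1) * convDen x (n + 1) + convDen x n) =
      completeQuot x (n + 1) * convNum x (n + 1) + convNum x n := by
  induction n with
  | zero =>
    have hx₀ : x = partialQuot x 0 + (completeQuot x 1)⁻¹ :=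
      completeQuot_eq_partialQuot_add_inv x 0
    have hα : completeQuot x 1 ≠ 0 := (zero_lt_one.trans (one_lt_completeQuot_succ hx 0)).ne'
    simp only [convNum, convDen, contSeq, Int.cast_one, Int.cast_zero]
    field_simp at hx₀
    linear_combination hx₀
  | succ n ih =>
    unfold convNum convDen at *
    rw [completeQuot_mul_contSeq_add hx, completeQuot_mul_contSeq_add hx, ← ih]
    ring

theorem abs_sub_convergent (hx : Irrational x) (n : ℕ) :
    |x - convNum x (n + 1) / convDen x (n + 1)| =
      1 / ((convDen x (n + 1) : ℝ) ^ 2 * approxFactor x n) := by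
  set α := completeQuot x (n + 1)
  set p := (convNum x (n + 1) : ℝ)
  set q := (convDen x (n + 1) : ℝ)
  have hq : 0 < q := convDen_pos hx n
  have hD : 0 < α * q + convDen x n := by
    nlinarith [one_lt_completeQuot_succ hx n, convDen_nonneg hx n]
  have hdet : |p * convDen x n - convNum x n * q| = 1 := by
    have : p * convDen x n - convNum x n * q = (-1) ^ (n + 1) := by
      simpa using congrArg (Int.cast : ℤ → ℝ) (convNum_mul_convDen_sub x n)
    rw [this, abs_pow, abs_neg, abs_one, one_pow]
  have hdiff : x - p / q = -(p * convDen x n - convNum x n * q) / (q * (α * q + convDen x n)) := by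
    have hpq : p / q * q = p := div_mul_cancel₀ p hq.ne'
    rw [eq_div_iff (by positivity)]
    linear_combination q * mul_completeQuot_mul_convDen_add hx n - (α * q + convDen x n) * hpq
  rw [hdiff, abs_div, abs_neg, hdet, abs_of_pos (by positivity)]
  change _ = 1 / (q ^ 2 * (α + convDen x n / q))
  congr 1
  field_simp

theorem abs_sub_convergent_lt_iff (hx : Irrational x) (n : ℕ) :
    |x - convNum x (n + 1) / convDen x (n + 1)| < 1 / (√5 * (convDen x (n + 1) : ℝ) ^ 2) ↔
      √5 < approxFactor x n := by
  have hq := convDen_pos hx n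
  have hfac : 0 < approxFactor x n :=
    add_pos_of_pos_of_nonneg (zero_lt_one.trans (one_lt_completeQuot_succ hx n))
      (div_nonneg (convDen_nonneg hx n) hq.le)
  rw [abs_sub_convergent hx n, one_div_lt_one_div (by positivity) (by positivity), mul_comm,
    mul_lt_mul_iff_of_pos_left (by positivity)]

theorem denRatio_pos (hx : Irrational x) (n : ℕ) : 0 < denRatio x (n + 1) :=
  div_pos (convDen_pos hx n) (convDen_pos hx (n + 1))

theorem inv_denRatio_succ (hx : Irrational x) (n : ℕ) :
    (denRatio x (n + 1))⁻¹ = partialQuot x (n + 1) + denRatio x n := by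
  have hq : (convDen x (n + 1) : ℝ) ≠ 0 := (convDen_pos hx n).ne'
  have hrec :
      (convDen x (n + 2) : ℝ) = partialQuot x (n + 1) * convDen x (n + 1) + convDen x n := by
    exact_mod_cast contSeq_add_two (partialQuot x) 0 1 n
  rw [denRatio, denRatio, inv_div, hrec]
  field_simp

theorem approxFactor_eq_inv_add_inv (hx : Irrational x) (n : ℕ) :
    approxFactor x n = (completeQuot x (n + 2))⁻¹ + (denRatio x (n + 1))⁻¹ := by
  rw [approxFactor, inv_denRatio_succ hx, completeQuot_eq_partialQuot_add_inv x (n + 1)]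
  ring

theorem inv_goldenRatio_le_denRatio (hx : Irrational x) {n : ℕ} (h₀ : approxFactor x n ≤ √5)
    (h₁ : approxFactor x (n + 1) ≤ √5) : φ⁻¹ ≤ denRatio x (n + 1) :=
  inv_goldenRatio_le_of_add_le_sqrt_five (zero_lt_one.trans (one_lt_completeQuot_succ hx (n + 1)))
    (denRatio_pos hx n) h₁ ((approxFactor_eq_inv_add_inv hx n).symm.trans_le h₀)

theorem exists_sqrt_five_lt_approxFactor (hx : Irrational x) (n : ℕ) :
    ∃ k ≤ 2, √5 < approxFactor x (n + k) := by
  by_contra! h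
  have hb₂ : φ⁻¹ ≤ denRatio x (n + 2) :=
    inv_goldenRatio_le_denRatio hx (h 1 one_le_two) (h 2 le_rfl)
  have hφ : φ ≤ (denRatio x (n + 2))⁻¹ := by
    have ha : (1 : ℝ) ≤ partialQuot x (n + 2) := by
      exact_mod_cast one_le_partialQuot_succ hx (n + 1)
    have hb₁ := inv_goldenRatio_le_denRatio hx (h 0 zero_le_two) (h 1 one_le_two)
    have hgold : 1 + φ⁻¹ = φ := by rw [inv_goldenRatio, ← sub_eq_add_neg, one_sub_goldenRatio]
    rw [inv_denRatio_succ hx (n + 1)]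
    linarith
  have heq : denRatio x (n + 2) = φ⁻¹ :=
    le_antisymm (inv_inv (denRatio x (n + 2)) ▸ inv_anti₀ goldenRatio_pos hφ) hb₂
  refine goldenRatio_irrational ⟨(convDen x (n + 3) / convDen x (n + 2) : ℚ), ?_⟩
  rw [← inv_inv φ, ← heq, denRatio, inv_div]
  norm_cast

theorem infinite_setOf_sqrt_five_lt_approxFactor (hx : Irrational x) :
    {n | √5 < approxFactor x (n + 1)}.Infinite :=
  Set.infinite_of_forall_exists_gt fun n => by
    obtain ⟨k, hk, h⟩ := exists_sqrt_five_lt_approxFactor hx (n + 2)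
    refine ⟨n + 1 + k, ?_, by omega⟩
    show √5 < approxFactor x (n + 1 + k + 1)
    rwa [show n + 1 + k + 1 = n + 2 + k by omega]

theorem strictMono_convDen (hx : Irrational x) : StrictMono fun n => convDen x (n + 2) :=
  strictMono_contSeq_zero_one (one_le_partialQuot_succ hx)

end irrational

end Hurwitz

open Hurwitz

/-- Hurwitz's theorem: for every irrational real `x` there are infinitely many
rationals `p/q` in lowest terms with `|x - p/q| < 1/(√5 q²)`. -/
theorem hurwitz_approximation (x : ℝ) (hx : Irrational x) :
    {pq : ℤ × ℕ | 0 < pq.2 ∧ Nat.gcd pq.1.natAbs pq.2 = 1 ∧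
      |x - (pq.1 : ℝ) / (pq.2 : ℝ)| < 1 / (Real.sqrt 5 * (pq.2 : ℝ) ^ 2)}.Infinite := by
  refine Set.infinite_of_injOn_mapsTo
    (f := fun n => (convNum x (n + 2), (convDen x (n + 2)).natAbs))
    (fun m _ n _ hmn => (strictMono_convDen hx).injective ?_) (fun n hn => ?_)
    (infinite_setOf_sqrt_five_lt_approxFactor hx)
  · have hm : 0 < convDen x (m + 2) := by exact_mod_cast convDen_pos hx (m + 1)
    have hn : 0 < convDen x (n + 2) := by exact_mod_cast convDen_pos hx (n + 1)
    exact (Int.natAbs_inj_of_nonneg_of_nonneg hm.le hn.le).mp (congrArg Prod.snd hmn)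
  have hq : (0 : ℝ) < convDen x (n + 2) := convDen_pos hx (n + 1)
  have hq' : ((convDen x (n + 2)).natAbs : ℝ) = convDen x (n + 2) := by
    rw [Nat.cast_natAbs, Int.cast_abs, abs_of_pos hq]
  refine ⟨Int.natAbs_pos.mpr (by exact_mod_cast hq.ne'),
    Int.isCoprime_iff_gcd_eq_one.mp (isCoprime_convNum_convDen x (n + 1)), ?_⟩
  simpa only [hq'] using (abs_sub_convergent_lt_iff hx (n + 1)).mpr hn
end

section
/- Optimality of the Hurwitz constant: let φ = (1+√5)/2 be the golden ratio. For every real c > √5, there exist only finitely many rational numbers p/q (p ∈ ℤ, q ∈ ℕ₊) with |φ − p/q| < 1/(c · q²). -/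
set_option maxHeartbeats 1000000 in
/-- Optimality of the Hurwitz constant: for the golden ratio `φ = (1+√5)/2` and any
`c > √5`, only finitely many rationals `p/q` (`p ∈ ℤ`, `q ∈ ℕ₊`) satisfy
`|φ - p/q| < 1/(c q²)`. -/
theorem hurwitz_constant_optimal (c : ℝ) (hc : Real.sqrt 5 < c) :
    {pq : ℤ × ℕ | 0 < pq.2 ∧
      |(1 + Real.sqrt 5) / 2 - (pq.1 : ℝ) / (pq.2 : ℝ)| < 1 / (c * (pq.2 : ℝ) ^ 2)}.Finite := by
  have hs : Real.sqrt 5 ^ 2 = 5 := Real.sq_sqrt (by norm_num)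
  have hsnn : (0:ℝ) ≤ Real.sqrt 5 := Real.sqrt_nonneg 5
  have hs2 : (2:ℝ) < Real.sqrt 5 := by nlinarith
  have hs3 : Real.sqrt 5 < 3 := by nlinarith
  have hc0 : (0:ℝ) < c := by linarith
  have hcs : 0 < c - Real.sqrt 5 := by linarith
  set B : ℝ := 1 / (c * (c - Real.sqrt 5)) with hBdef
  set N : ℕ := ⌈B⌉₊ with hNdef
  apply Set.Finite.subset ((Set.finite_Icc (-(3*(N:ℤ))) (3*N)).prod (Set.finite_Icc 0 N))
  rintro ⟨p, q⟩ ⟨hq, hlt⟩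
  simp only at hlt hq
  have hq1 : (1:ℝ) ≤ q := by exact_mod_cast hq
  have hq0 : (0:ℝ) < q := by linarith
  have hQ : (0:ℝ) < (q:ℝ)^2 := by positivity
  set φ : ℝ := (1 + Real.sqrt 5) / 2 with hφ
  set ψ : ℝ := (1 - Real.sqrt 5) / 2 with hψ
  set r : ℝ := (p:ℝ)/(q:ℝ) with hr
  -- the integer p² - pq - q² is nonzero
  have hnz : (p^2 - p*q - q^2 : ℤ) ≠ 0 := by
    intro h
    have h2 : ((2*p - q)^2 : ℤ) = 5 * q^2 := by linear_combination 4*h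
    have h3 : ((2*p - (q:ℤ)) : ℝ)^2 = 5 * (q:ℝ)^2 := by exact_mod_cast h2
    have h4 : |((2*p - (q:ℤ)) : ℝ)| = Real.sqrt 5 * q := by
      rw [← Real.sqrt_sq_eq_abs, h3, Real.sqrt_mul (by norm_num), Real.sqrt_sq hq0.le]
    have h5 : Real.sqrt 5 = (((|2*p - (q:ℤ)| : ℤ) / (q:ℤ) : ℚ) : ℝ) := by
      push_cast
      rw [eq_div_iff hq0.ne']
      rw [← h4]
      push_cast [abs_sub_comm]
      rw [abs_sub_comm]
    have hirr : Irrational (Real.sqrt 5) := by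
      have := (by norm_num : Nat.Prime 5).irrational_sqrt
      simpa using this
    exact hirr ⟨_, h5.symm⟩
  have hfac1 : (φ - r) * (ψ - r) = r^2 - r - 1 := by
    rw [hφ, hψ]; ring_nf; linear_combination (-1/4 : ℝ) * hs
  have hfac2 : r^2 - r - 1 = ((p^2 - p*q - q^2 : ℤ) : ℝ) / (q:ℝ)^2 := by
    rw [hr]; field_simp; push_cast; ring
  have habs : (1:ℝ)/(q:ℝ)^2 ≤ |φ - r| * |ψ - r| := by
    rw [← abs_mul, hfac1, hfac2, abs_div, abs_of_pos hQ]
    have h1 : (1:ℝ) ≤ |((p^2 - p*q - q^2 : ℤ) : ℝ)| := by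
      have := Int.one_le_abs hnz
      exact_mod_cast this
    gcongr
  set A : ℝ := 1 / (c * (q:ℝ)^2) with hA
  have hApos : 0 < A := by rw [hA]; positivity
  have hψr : |ψ - r| ≤ Real.sqrt 5 + A := by
    have he : ψ - r = (φ - r) - Real.sqrt 5 := by rw [hφ, hψ]; ring
    calc |ψ - r| ≤ |φ - r| + |Real.sqrt 5| := by rw [he]; exact abs_sub _ _
      _ ≤ Real.sqrt 5 + A := by rw [abs_of_nonneg hsnn]; linarith [hlt.le]
  have hψpos : 0 < |ψ - r| := by
    rcases (abs_nonneg (ψ - r)).lt_or_eq with h | h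
    · exact h
    · exfalso; rw [← h] at habs; simp at habs; nlinarith
  have hkey : (1:ℝ)/(q:ℝ)^2 < A * (Real.sqrt 5 + A) := by
    calc (1:ℝ)/(q:ℝ)^2 ≤ |φ - r| * |ψ - r| := habs
      _ < A * |ψ - r| := by exact mul_lt_mul_of_pos_right hlt hψpos
      _ ≤ A * (Real.sqrt 5 + A) := by exact mul_le_mul_of_nonneg_left hψr hApos.le
  -- deduce q² < B
  have hqB : ((q:ℝ))^2 < B := by
    rw [hBdef, lt_div_iff₀ (by positivity)]
    rw [hA] at hkey
    rw [div_lt_iff₀ hQ] at hkey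
    have hexp : (1 / (c * (q:ℝ)^2) * (Real.sqrt 5 + 1 / (c * (q:ℝ)^2))) * (q:ℝ)^2
        = Real.sqrt 5 / c + 1 / (c^2 * (q:ℝ)^2) := by
      field_simp
    rw [hexp] at hkey
    -- 1 < √5/c + 1/(c²q²)  ⇒ q²·c(c−√5) < 1
    have h1 : (c - Real.sqrt 5) / c < 1 / (c^2 * (q:ℝ)^2) := by
      have : 1 - Real.sqrt 5 / c = (c - Real.sqrt 5)/c := by field_simp
      linarith [hkey, this]
    rw [div_lt_div_iff₀ hc0 (by positivity)] at h1
    nlinarith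
  have hqN : q ≤ N := by
    have h1 : (q:ℝ) ≤ (q:ℝ)^2 := by nlinarith
    have h2 : (q:ℝ) < (N:ℝ) := lt_of_lt_of_le (lt_of_le_of_lt h1 hqB) (by exact_mod_cast Nat.le_ceil B)
    exact_mod_cast h2.le
  constructor
  · have hA1 : A < 1 := by
      rw [hA, div_lt_one (by positivity)]
      nlinarith [hq1, hs2]
    have hr3 : |r| < 3 := by
      calc |r| = |φ - (φ - r)| := by rw [sub_sub_cancel]
        _ ≤ |φ| + |φ - r| := abs_sub _ _
        _ < 3 := by
            rw [abs_of_nonneg (by rw [hφ]; linarith : (0:ℝ) ≤ φ)]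
            rw [hφ]
            linarith [hlt.trans hA1]
    have hpr : |(p:ℝ)| ≤ 3 * (q:ℝ) := by
      rw [hr, abs_div, abs_of_pos hq0, div_lt_iff₀ hq0] at hr3
      linarith
    have hfin : |(p:ℝ)| ≤ 3 * (N:ℝ) := by
      have : (q:ℝ) ≤ (N:ℝ) := by exact_mod_cast hqN
      nlinarith [abs_nonneg (p:ℝ)]
    have hfinZ : |p| ≤ 3 * (N:ℤ) := by exact_mod_cast hfin
    simpa [Set.mem_Icc] using abs_le.mp hfinZ
  · simp only [Set.mem_Icc]
    exact ⟨Nat.zero_le _, hqN⟩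
end
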